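/- arXiv:1908.05445 — 8 statements merged into one kernel-verified Lean document; each statement's English description precedes it below -/
import Mathlib

section
/- Let G be a finite undirected simple graph with distinguished vertices s and t in which every edge lies on some s-t path. Then every simple cycle in G contains at least one entry-exit pair, i.e., for every simple cycle C there exists an entry-exit pair with respect to C. -/
open SimpleGraph

variable {V : Type*}

/-- `(s', t')` is an entry-exit pair with respect to the simple cycle `c`:
there are vertex-disjoint simple paths from `s` to `s'` and from `t'` to `t`,
each sharing with `c` exactly the vertex `s'` (resp. `t'`). -/
def IsEntryExit (G : SimpleGraph V) (s t : V) {v : V} (c : G.Walk v v) (s' t' : V) : Prop :=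
  s' ∈ c.support ∧ t' ∈ c.support ∧
  ∃ (ps : G.Walk s s') (pt : G.Walk t' t),
    ps.IsPath ∧ pt.IsPath ∧
    (∀ x, x ∈ ps.support → x ∉ pt.support) ∧
    (∀ x, x ∈ ps.support → x ∈ c.support → x = s') ∧
    (∀ x, x ∈ pt.support → x ∈ c.support → x = t')

/-- Split a walk at the last vertex satisfying `S`. -/
lemma walk_split_last {G : SimpleGraph V} {u w : V} (p : G.Walk u w) (S : V → Prop)
    (h : ∃ y ∈ p.support, S y) :
    ∃ x, S x ∧ ∃ (q1 : G.Walk u x) (q2 : G.Walk x w),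
      p = q1.append q2 ∧ ∀ y ∈ q2.support, S y → y = x := by
  induction p with
  | nil =>
    obtain ⟨y, hy, hSy⟩ := h
    simp only [SimpleGraph.Walk.support_nil, List.mem_singleton] at hy
    subst hy
    exact ⟨y, hSy, SimpleGraph.Walk.nil, SimpleGraph.Walk.nil, rfl, by
      intro z hz _; simpa using hz⟩
  | @cons a b c hadj p' ih =>
    by_cases h' : ∃ y ∈ p'.support, S y
    · obtain ⟨x, hSx, q1, q2, heq, hq2⟩ := ih h'
      exact ⟨x, hSx, SimpleGraph.Walk.cons hadj q1, q2, by rw [heq]; rfl, hq2⟩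
    · obtain ⟨y, hy, hSy⟩ := h
      rw [SimpleGraph.Walk.support_cons, List.mem_cons] at hy
      rcases hy with rfl | hy
      · refine ⟨y, hSy, SimpleGraph.Walk.nil, SimpleGraph.Walk.cons hadj p', rfl, ?_⟩
        intro z hz hSz
        rw [SimpleGraph.Walk.support_cons, List.mem_cons] at hz
        rcases hz with rfl | hz
        · rfl
        · exact absurd ⟨z, hz, hSz⟩ h'
      · exact absurd ⟨y, hy, hSy⟩ h'

/-- Split a walk at the first vertex satisfying `S`. -/
lemma walk_split_first {G : SimpleGraph V} {u w : V} (p : G.Walk u w) (S : V → Prop)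
    (h : ∃ y ∈ p.support, S y) :
    ∃ x, S x ∧ ∃ (q1 : G.Walk u x) (q2 : G.Walk x w),
      p = q1.append q2 ∧ ∀ y ∈ q1.support, S y → y = x := by
  obtain ⟨x, hSx, q1, q2, heq, hq2⟩ := walk_split_last p.reverse S (by
    obtain ⟨y, hy, hSy⟩ := h
    exact ⟨y, by simpa using hy, hSy⟩)
  refine ⟨x, hSx, q2.reverse, q1.reverse, ?_, ?_⟩
  · have := congrArg SimpleGraph.Walk.reverse heq
    rwa [SimpleGraph.Walk.reverse_reverse, SimpleGraph.Walk.reverse_append] at this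
  · intro y hy hSy
    exact hq2 y (by simpa using hy) hSy

/-- If every edge of `G` lies on some s-t simple path, then every simple cycle
contains at least one entry-exit pair. -/
theorem every_cycle_has_entry_exit [Fintype V] (G : SimpleGraph V) (s t : V)
    (hE : ∀ e ∈ G.edgeSet, ∃ p : G.Walk s t, p.IsPath ∧ e ∈ p.edges) :
    ∀ (v : V) (c : G.Walk v v), c.IsCycle →
      ∃ s' t', IsEntryExit G s t c s' t' := by
  intro v c hc
  classical
  -- the cycle has an edge
  have hlen : c.edges ≠ [] := by
    have h3 := hc.three_le_length
    intro hnil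
    have : c.length = 0 := by
      have := congrArg List.length hnil
      simpa [SimpleGraph.Walk.length_edges] using this
    omega
  obtain ⟨e, he⟩ := List.exists_mem_of_ne_nil _ hlen
  induction e using Sym2.inductionOn with
  | hf a b =>
  have hadj : G.Adj a b := c.adj_of_mem_edges he
  have hab : a ≠ b := hadj.ne
  have hac : a ∈ c.support := c.fst_mem_support_of_mem_edges he
  have hbc : b ∈ c.support := c.snd_mem_support_of_mem_edges he
  obtain ⟨p, hp, hep⟩ := hE s(a, b) hadj
  have hap : a ∈ p.support := p.fst_mem_support_of_mem_edges hep
  have hbp : b ∈ p.support := p.snd_mem_support_of_mem_edges hep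
  set S : V → Prop := fun y => y ∈ c.support with hS
  obtain ⟨s', hs'S, ps, r, hpeq, hps⟩ := walk_split_first p S ⟨a, hap, hac⟩
  obtain ⟨t', ht'S, q, pt, hreq, hpt⟩ := walk_split_last r S
    ⟨s', r.start_mem_support, hs'S⟩
  subst hreq
  subst hpeq
  -- path facts
  have hps_path : ps.IsPath := hp.of_append_left
  have hqpt_path : (q.append pt).IsPath := hp.of_append_right
  have hpt_path : pt.IsPath := hqpt_path.of_append_right
  -- s' ≠ t'
  have hne : s' ≠ t' := by
    rintro rfl
    have hqnil : q = SimpleGraph.Walk.nil :=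
      SimpleGraph.Walk.isPath_iff_eq_nil.mp hqpt_path.of_append_left
    subst hqnil
    have key : ∀ y, y ∈ (ps.append (SimpleGraph.Walk.nil.append pt)).support →
        S y → y = s' := by
      intro y hy hSy
      rw [SimpleGraph.Walk.mem_support_append_iff] at hy
      rcases hy with hy | hy
      · exact hps y hy hSy
      · rw [SimpleGraph.Walk.mem_support_append_iff] at hy
        rcases hy with hy | hy
        · simpa using hy
        · exact hpt y hy hSy
    exact hab ((key a hap hac).trans (key b hbp hbc).symm)
  -- disjointness of ps and pt
  have hnd := hp.support_nodup
  rw [SimpleGraph.Walk.support_append, List.nodup_append] at hnd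
  obtain ⟨-, -, hdisj⟩ := hnd
  refine ⟨s', t', hs'S, ht'S, ps, pt, hps_path, hpt_path, ?_, hps, hpt⟩
  intro x hx hx'
  have hxs : x ≠ s' := by
    rintro rfl
    exact hne (hpt x hx' hs'S)
  have hx2 : x ∈ (q.append pt).support :=
    (SimpleGraph.Walk.mem_support_append_iff _ _).mpr (Or.inr hx')
  rw [SimpleGraph.Walk.support_eq_cons, List.mem_cons] at hx2
  rcases hx2 with rfl | hx2
  · exact hxs rfl
  · exact hdisj x hx x hx2 rfl
end

section
/- Let G be a finite undirected simple graph with distinguished vertices s and t, let C be a simple cycle in G, and let P be an s-t path that shares at least one edge with C. Let s' be the first vertex of P (in the order from s to t) that lies on C and let t' be the last vertex of P that lies on C. Then (s',t') is an entry-exit pair with respect to C. -/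
open SimpleGraph

variable {V : Type*}

private lemma head_of_eq_cons {α : Type*} {l : List α} {a : α} {m : List α}
    (h : l ≠ []) (he : l = a :: m) : l.head h = a := by subst he; rfl

private lemma getLast_of_eq_append {α : Type*} {l l₁ l₂ : List α}
    (h : l ≠ []) (he : l = l₁ ++ l₂) (h₂ : l₂ ≠ []) : l.getLast h = l₂.getLast h₂ := by
  subst he; exact List.getLast_append_of_ne_nil h h₂

private lemma head_ne_getLast_of_nodup {α : Type*} {l : List α} (h : l ≠ [])
    (hn : l.Nodup) (h2 : 2 ≤ l.length) : l.head h ≠ l.getLast h := by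
  match l with
  | a :: b :: M =>
    simp only [List.head_cons]
    rw [List.getLast_cons (by simp : b :: M ≠ [])]
    intro he
    exact (List.nodup_cons.mp hn).1 (he ▸ List.getLast_mem (by simp))

/-- If an s-t simple path `p` shares an edge with a simple cycle `c`, then the first and
the last vertices of `p` that lie on `c` form an entry-exit pair with respect to `c`. -/
theorem first_last_on_cycle_entry_exit [Fintype V] [DecidableEq V]
    (G : SimpleGraph V) (s t : V) {v : V} (c : G.Walk v v) (hc : c.IsCycle)
    (p : G.Walk s t) (hp : p.IsPath)
    (hshare : ∃ e, e ∈ p.edges ∧ e ∈ c.edges)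
    (hne : p.support.filter (· ∈ c.support) ≠ [])
    (s' t' : V)
    (hs' : s' = (p.support.filter (· ∈ c.support)).head hne)
    (ht' : t' = (p.support.filter (· ∈ c.support)).getLast hne) :
    IsEntryExit G s t c s' t' := by
  classical
  set L := p.support.filter (· ∈ c.support) with hL
  -- basic memberships
  have hs'L : s' ∈ L := hs' ▸ List.head_mem hne
  have ht'L : t' ∈ L := ht' ▸ List.getLast_mem hne
  have hs'p : s' ∈ p.support := (List.mem_filter.mp hs'L).1
  have hs'c : s' ∈ c.support := by
    have := (List.mem_filter.mp hs'L).2; simpa using this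
  have ht'p : t' ∈ p.support := (List.mem_filter.mp ht'L).1
  have ht'c : t' ∈ c.support := by
    have := (List.mem_filter.mp ht'L).2; simpa using this
  have hLnd : L.Nodup := hp.support_nodup.filter _
  -- s' ≠ t'
  have hst : s' ≠ t' := by
    obtain ⟨e, hep, hec⟩ := hshare
    induction e with
    | h u w =>
      have huw : u ≠ w := G.ne_of_adj (p.adj_of_mem_edges hep)
      have huL : u ∈ L := List.mem_filter.mpr
        ⟨p.fst_mem_support_of_mem_edges hep, by simpa using c.fst_mem_support_of_mem_edges hec⟩
      have hwL : w ∈ L := List.mem_filter.mpr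
        ⟨p.snd_mem_support_of_mem_edges hep, by simpa using c.snd_mem_support_of_mem_edges hec⟩
      have h2 : 2 ≤ L.length := by
        obtain ⟨a, M, hM⟩ := List.exists_cons_of_ne_nil hne
        rcases M with _ | ⟨b, M⟩
        · exfalso
          rw [hM] at huL hwL
          simp at huL hwL
          exact huw (huL.trans hwL.symm)
        · rw [hM]; simp
      exact fun hstt => head_ne_getLast_of_nodup hne hLnd h2 (hs' ▸ hstt ▸ ht')
  -- the first piece
  set ps := p.takeUntil s' hs'p with hps_def
  have hps : ps.IsPath := hp.takeUntil hs'p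
  set q := p.dropUntil s' hs'p with hq_def
  have hdec : p.support = ps.support ++ q.support.tail := by
    conv_lhs => rw [← p.take_spec hs'p]
    rw [Walk.support_append]
  -- decompose ps.support as D ++ [s']
  set D := ps.support.dropLast with hD
  have hpsD : ps.support = D ++ [s'] := by
    conv_lhs => rw [← List.dropLast_append_getLast (l := ps.support) (by simp)]
    rw [ps.getLast_support]
  have hs'nD : s' ∉ D := by
    have := hps.support_nodup
    rw [hpsD] at this
    intro h
    exact (List.disjoint_of_nodup_append this) h (by simp)
  have hfD : D.filter (· ∈ c.support) = [] := by
    rcases hFD : D.filter (· ∈ c.support) with _ | ⟨a, as⟩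
    · rfl
    · exfalso
      have hL2 : L = a :: (as ++ ([s'] ++ (q.support.tail.filter (· ∈ c.support)))) := by
        rw [hL, hdec, List.filter_append, hpsD, List.filter_append, hFD]
        simp [hs'c]
      have : s' = a := hs'.trans (head_of_eq_cons hne hL2)
      apply hs'nD
      have : a ∈ D.filter (· ∈ c.support) := by rw [hFD]; simp
      rw [← ‹s' = a›] at this
      exact (List.mem_filter.mp this).1
  have claim1 : ∀ x ∈ ps.support, x ∈ c.support → x = s' := by
    intro x hx hxc
    rw [hpsD] at hx
    rcases List.mem_append.mp hx with hx | hx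
    · exfalso
      have : x ∈ D.filter (· ∈ c.support) := List.mem_filter.mpr ⟨hx, by simpa using hxc⟩
      rw [hfD] at this; exact List.not_mem_nil this
    · simpa using hx
  -- t' is in q.support.tail
  have ht'tail : t' ∈ q.support.tail := by
    have : t' ∉ ps.support := fun h => hst (claim1 t' h ht'c).symm
    rcases List.mem_append.mp (hdec ▸ ht'p) with h | h
    · exact absurd h this
    · exact h
  have ht'q : t' ∈ q.support := List.mem_of_mem_tail ht'tail
  set pt := q.dropUntil t' ht'q with hpt_def
  have hqp : q.IsPath := hp.dropUntil hs'p
  have hpt : pt.IsPath := hqp.dropUntil ht'q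
  set A := q.takeUntil t' ht'q with hA
  have hqdec : q.support = A.support ++ pt.support.tail := by
    conv_lhs => rw [← q.take_spec ht'q]
    rw [Walk.support_append]
  have hqtail : q.support.tail = A.support.tail ++ pt.support.tail := by
    rw [hqdec, List.tail_append_of_ne_nil (Walk.support_ne_nil _)]
  -- pt.support ⊆ q.support.tail
  have hptsub : ∀ x ∈ pt.support, x ∈ q.support.tail := by
    intro x hx
    rw [pt.support_eq_cons] at hx
    rw [List.mem_cons] at hx
    rcases hx with rfl | hx
    · exact ht'tail
    · rw [hqtail]; exact List.mem_append.mpr (Or.inr hx)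
  -- disjointness
  have hdisj : ∀ x ∈ ps.support, x ∉ pt.support := by
    have hnd := hp.support_nodup
    rw [hdec] at hnd
    intro x hx hx'
    exact (List.disjoint_of_nodup_append hnd) hx (hptsub x hx')
  -- last piece: filter of pt.support.tail is empty
  have ht'ntail : t' ∉ pt.support.tail := by
    have := hpt.support_nodup
    rw [pt.support_eq_cons] at this
    exact (List.nodup_cons.mp this).1
  have hfT : pt.support.tail.filter (· ∈ c.support) = [] := by
    rcases hFT : pt.support.tail.filter (· ∈ c.support) with _ | ⟨a, as⟩
    · rfl
    · exfalso
      have hL3 : L = (ps.support.filter (· ∈ c.support) ++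
          A.support.tail.filter (· ∈ c.support)) ++ (a :: as) := by
        rw [hL, hdec, hqtail, List.filter_append, List.filter_append, hFT, List.append_assoc]
      have hlast : t' = (a :: as).getLast (by simp) := by
        rw [ht']
        exact getLast_of_eq_append hne hL3 (by simp)
      apply ht'ntail
      have : (a :: as).getLast (by simp) ∈ (a :: as) := List.getLast_mem _
      rw [← hlast] at this
      have : t' ∈ pt.support.tail.filter (· ∈ c.support) := hFT ▸ this
      exact (List.mem_filter.mp this).1
  have claim2 : ∀ x ∈ pt.support, x ∈ c.support → x = t' := by
    intro x hx hxc
    rw [pt.support_eq_cons, List.mem_cons] at hx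
    rcases hx with rfl | hx
    · rfl
    · exfalso
      have : x ∈ pt.support.tail.filter (· ∈ c.support) :=
        List.mem_filter.mpr ⟨hx, by simpa using hxc⟩
      rw [hfT] at this; exact List.not_mem_nil this
  exact ⟨hs'c, ht'c, ps, pt, hps, hpt, hdisj, claim1, claim2⟩
end

section
/- Let G be a finite undirected simple graph with distinguished vertices s and t in which every edge lies on some s-t path, and suppose (G,s,t) admits a tracking set. Let u and v be adjacent vertices of G, both of degree exactly 2, with u,v ∉ {s,t}. Then there exists a tracking set T of minimum cardinality among all tracking sets of (G,s,t) such that T does not contain both u and v. -/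
open SimpleGraph

variable {V : Type*}

/-- `T` is a tracking set for `(G,s,t)`: any two distinct s-t simple paths yield distinct
sequences of tracked vertices (the ordered list of vertices of `T` along the path). -/
def IsTrackingSet [DecidableEq V] (G : SimpleGraph V) (s t : V) (T : Finset V) : Prop :=
  ∀ p q : G.Walk s t, p.IsPath → q.IsPath →
    p.support.filter (· ∈ T) = q.support.filter (· ∈ T) → p = q


private lemma list_cancel {α : Type*} {x : α} :
    ∀ (A : List α) {C B D : List α}, A ++ x :: B = C ++ x :: D → x ∉ A → x ∉ C → A = C ∧ B = D := by
  intro A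
  induction A with
  | nil =>
    intro C B D h hA hC
    cases C with
    | nil => simpa using h
    | cons c C' =>
      simp only [List.nil_append, List.cons_append, List.cons.injEq] at h
      exact absurd (h.1 ▸ (List.mem_cons_self : c ∈ c :: C')) hC
  | cons a A' ih =>
    intro C B D h hA hC
    cases C with
    | nil =>
      simp only [List.cons_append, List.nil_append, List.cons.injEq] at h
      exact absurd (h.1.symm ▸ (List.mem_cons_self : a ∈ a :: A')) hA
    | cons c C' =>
      simp only [List.cons_append, List.cons.injEq] at h
      obtain ⟨rfl, h2⟩ := h
      obtain ⟨h3, h4⟩ := ih h2 (fun hx => hA (List.mem_cons_of_mem _ hx))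
        (fun hx => hC (List.mem_cons_of_mem _ hx))
      exact ⟨by rw [h3], h4⟩

private lemma middle_eq {α : Type*} {u w : α} (huw : u ≠ w) {A B C D : List α}
    {a b c d : α}
    (ho1 : (a = u ∧ b = w) ∨ (a = w ∧ b = u)) (ho2 : (c = u ∧ d = w) ∨ (c = w ∧ d = u))
    (hAu : u ∉ A) (hAw : w ∉ A) (hCu : u ∉ C) (hCw : w ∉ C)
    (h : A ++ a :: b :: B = C ++ c :: d :: D) : A = C ∧ a = c ∧ b = d ∧ B = D := by
  rcases ho1 with ⟨ha, hb⟩ | ⟨ha, hb⟩ <;> rcases ho2 with ⟨hc, hd⟩ | ⟨hc, hd⟩ <;>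
    rw [ha, hb] at h <;> rw [hc, hd] at h <;>
    rw [ha, hb, hc, hd]
  · obtain ⟨h1, h2⟩ := list_cancel A h hAu hCu
    exact ⟨h1, rfl, rfl, by injection h2⟩
  · rw [List.append_cons C w (u :: D)] at h
    obtain ⟨h1, h2⟩ := list_cancel A h hAu (by
      simp only [List.mem_append, List.mem_singleton]
      rintro (h | h); exact hCu h; exact huw h)
    exact absurd (h1 ▸ (List.mem_append.mpr (Or.inr (List.mem_singleton_self w)))) hAw
  · rw [List.append_cons A w (u :: B)] at h
    obtain ⟨h1, h2⟩ := list_cancel (A ++ [w]) h (by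
      simp only [List.mem_append, List.mem_singleton]
      rintro (h | h); exact hAu h; exact huw h) hCu
    exact absurd (h1 ▸ (List.mem_append.mpr (Or.inr (List.mem_singleton_self w)))) hCw
  · obtain ⟨h1, h2⟩ := list_cancel A h hAw hCw
    exact ⟨h1, rfl, rfl, by injection h2⟩

private lemma filter_decomp [DecidableEq V] {T T' : Finset V} {u v w : V}
    (huT' : u ∈ T') (hwT' : w ∈ T') (hvT' : v ∉ T')
    (hiff : ∀ x, x ≠ v → x ≠ w → (x ∈ T' ↔ x ∈ T))
    {X Y : List V} {a b : V} (hor : (a = u ∧ b = w) ∨ (a = w ∧ b = u))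
    (hnd : (X ++ a :: v :: b :: Y).Nodup) :
    (X ++ a :: v :: b :: Y).filter (· ∈ T') =
      X.filter (· ∈ T) ++ a :: b :: Y.filter (· ∈ T) ∧
    (X ++ a :: v :: b :: Y).filter (· ∈ T) =
      X.filter (· ∈ T) ++ List.filter (· ∈ T) [a, v, b] ++ Y.filter (· ∈ T) ∧
    u ∉ X ∧ w ∉ X ∧ u ∉ Y ∧ w ∉ Y := by
  rw [List.nodup_append] at hnd
  obtain ⟨-, hnd2, hdisj⟩ := hnd
  have haX : a ∉ X := fun h => hdisj _ h _ (by simp) rfl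
  have hbX : b ∉ X := fun h => hdisj _ h _ (by simp) rfl
  have hvX : v ∉ X := fun h => hdisj _ h _ (by simp) rfl
  simp only [List.nodup_cons, List.mem_cons, not_or] at hnd2
  obtain ⟨⟨hav, hab, haY⟩, ⟨hvb, hvY⟩, hbY, -⟩ := hnd2
  have huX : u ∉ X := by rcases hor with ⟨rfl, -⟩ | ⟨-, rfl⟩ <;> assumption
  have hwX : w ∉ X := by rcases hor with ⟨-, rfl⟩ | ⟨rfl, -⟩ <;> assumption
  have huY : u ∉ Y := by rcases hor with ⟨rfl, -⟩ | ⟨-, rfl⟩ <;> assumption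
  have hwY : w ∉ Y := by rcases hor with ⟨-, rfl⟩ | ⟨rfl, -⟩ <;> assumption
  have haT' : a ∈ T' := by rcases hor with ⟨rfl, -⟩ | ⟨rfl, -⟩ <;> assumption
  have hbT' : b ∈ T' := by rcases hor with ⟨-, rfl⟩ | ⟨-, rfl⟩ <;> assumption
  have hX : X.filter (· ∈ T') = X.filter (· ∈ T) := List.filter_congr (fun x hx =>
    decide_eq_decide.mpr (hiff x (fun h => hvX (h ▸ hx)) (fun h => hwX (h ▸ hx))))
  have hY : Y.filter (· ∈ T') = Y.filter (· ∈ T) := List.filter_congr (fun x hx =>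
    decide_eq_decide.mpr (hiff x (fun h => hvY (h ▸ hx)) (fun h => hwY (h ▸ hx))))
  refine ⟨?_, ?_, huX, hwX, huY, hwY⟩
  · rw [List.filter_append, hX]
    congr 1
    rw [List.filter_cons_of_pos (by simpa using haT'),
        List.filter_cons_of_neg (by simpa using hvT'),
        List.filter_cons_of_pos (by simpa using hbT'), hY]
  · show ((X ++ ([a, v, b] ++ Y)).filter (· ∈ T)) = _
    rw [List.filter_append, List.filter_append, List.append_assoc]

private lemma walk_decomp {G : SimpleGraph V} {t c : V} :
    ∀ {x : V} (p : G.Walk x t), c ∈ p.support → c ≠ x → c ≠ t →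
      ∃ a b X Y, p.support = X ++ a :: c :: b :: Y ∧ G.Adj a c ∧ G.Adj c b := by
  intro x p
  induction p with
  | nil => intro h hx _; simp at h; exact absurd h hx
  | @cons x y t h q ih =>
    intro hc hcx hct
    by_cases hcy : c = y
    · subst hcy
      cases q with
      | nil => exact absurd rfl hct
      | @cons y z t h' r =>
        refine ⟨x, z, [], r.support.tail, ?_, h, h'⟩
        simp only [Walk.support_cons, List.nil_append]
        rw [r.support_eq_cons]
        simp
    · have hc' : c ∈ q.support := by
        rcases (Walk.mem_support_iff _).mp hc with h1 | h1
        · exact absurd h1 hcx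
        · exact h1
      obtain ⟨a, b, X, Y, hs, hav, hvb⟩ := ih hc' hcy hct
      exact ⟨a, b, x :: X, Y, by simp [Walk.support_cons, hs], hav, hvb⟩

private lemma other_neighbor {G : SimpleGraph V} [Fintype V] [DecidableEq V] [DecidableRel G.Adj]
    {u v : V} (huv : G.Adj u v) (hd : G.degree v = 2) :
    ∃ w, w ≠ u ∧ G.Adj v w ∧ ∀ a, G.Adj v a → a = u ∨ a = w := by
  have hu : u ∈ G.neighborFinset v := by
    rw [SimpleGraph.mem_neighborFinset]; exact huv.symm
  have hcard : (G.neighborFinset v).card = 2 := hd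
  have h1 : ((G.neighborFinset v).erase u).card = 1 := by
    rw [Finset.card_erase_of_mem hu, hcard]
  obtain ⟨w, hw⟩ := Finset.card_eq_one.mp h1
  have hwmem : w ∈ (G.neighborFinset v).erase u := by rw [hw]; exact Finset.mem_singleton_self w
  refine ⟨w, (Finset.mem_erase.mp hwmem).1, (SimpleGraph.mem_neighborFinset _ _ _).mp
    (Finset.mem_of_mem_erase hwmem), ?_⟩
  intro a ha
  by_cases hau : a = u
  · exact Or.inl hau
  · have : a ∈ (G.neighborFinset v).erase u := Finset.mem_erase.mpr ⟨hau,
      (SimpleGraph.mem_neighborFinset _ _ _).mpr ha⟩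
    rw [hw] at this
    exact Or.inr (Finset.mem_singleton.mp this)

/-- If every edge lies on some s-t path, a tracking set exists, and `u, v ∉ {s,t}` are
adjacent vertices of degree 2, then some minimum-cardinality tracking set avoids
containing both `u` and `v`. -/
theorem exists_min_tracking_set_avoiding_adjacent_deg_two [Fintype V] [DecidableEq V]
    (G : SimpleGraph V) [DecidableRel G.Adj] (s t u v : V)
    (hE : ∀ e ∈ G.edgeSet, ∃ p : G.Walk s t, p.IsPath ∧ e ∈ p.edges)
    (hex : ∃ T : Finset V, IsTrackingSet G s t T)
    (huv : G.Adj u v) (hdu : G.degree u = 2) (hdv : G.degree v = 2)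
    (hus : u ≠ s) (hut : u ≠ t) (hvs : v ≠ s) (hvt : v ≠ t) :
    ∃ T : Finset V, IsTrackingSet G s t T ∧
      (∀ T' : Finset V, IsTrackingSet G s t T' → T.card ≤ T'.card) ∧
      ¬(u ∈ T ∧ v ∈ T) := by
  classical
  -- obtain a minimum-cardinality tracking set
  obtain ⟨T0, hT0⟩ := hex
  have hne : ∃ n, ∃ T : Finset V, IsTrackingSet G s t T ∧ T.card = n := ⟨T0.card, T0, hT0, rfl⟩
  obtain ⟨T, hT, hc⟩ := Nat.find_spec hne
  have hTmin : ∀ T' : Finset V, IsTrackingSet G s t T' → T.card ≤ T'.card := by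
    intro T' hT'
    rw [hc]
    exact Nat.find_min' hne ⟨T', hT', rfl⟩
  by_cases hboth : u ∈ T ∧ v ∈ T
  swap
  · exact ⟨T, hT, hTmin, hboth⟩
  obtain ⟨huT, hvT⟩ := hboth
  obtain ⟨w, hwu, hvw, hvnb⟩ := other_neighbor huv hdv
  obtain ⟨x', hx'v, hux', hunb⟩ := other_neighbor huv.symm hdu
  have huw : u ≠ w := fun h => hwu h.symm
  set T' : Finset V := insert w (T.erase v) with hT'def
  have huT' : u ∈ T' := Finset.mem_insert_of_mem (Finset.mem_erase.mpr ⟨huv.ne, huT⟩)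
  have hwT' : w ∈ T' := Finset.mem_insert_self _ _
  have hvT' : v ∉ T' := by
    simp only [hT'def, Finset.mem_insert, Finset.mem_erase]
    push_neg
    exact ⟨hvw.ne, fun h => absurd rfl h⟩
  have hiff : ∀ x, x ≠ v → x ≠ w → (x ∈ T' ↔ x ∈ T) := by
    intro x hxv hxw
    simp [hT'def, Finset.mem_insert, Finset.mem_erase, hxv, hxw]
  have hcard : T'.card ≤ T.card := by
    calc T'.card ≤ (T.erase v).card + 1 := Finset.card_insert_le _ _
    _ = T.card := Finset.card_erase_add_one hvT
  -- decomposition of any s-t path through v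
  have key : ∀ (r : G.Walk s t), r.IsPath → v ∈ r.support →
      ∃ a b X Y, r.support = X ++ a :: v :: b :: Y ∧
        ((a = u ∧ b = w) ∨ (a = w ∧ b = u)) := by
    intro r hr hvr
    obtain ⟨a, b, X, Y, hsup, hav, hvb⟩ := walk_decomp r hvr hvs hvt
    have hnd : (X ++ a :: v :: b :: Y).Nodup := hsup ▸ hr.support_nodup
    have hab : a ≠ b := by
      rw [List.nodup_append] at hnd
      have h2 := hnd.2.1
      simp only [List.nodup_cons, List.mem_cons, not_or] at h2
      exact h2.1.2.1
    have ha := hvnb a hav.symm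
    have hb := hvnb b hvb
    refine ⟨a, b, X, Y, hsup, ?_⟩
    rcases ha with rfl | rfl <;> rcases hb with rfl | rfl
    · exact absurd rfl hab
    · exact Or.inl ⟨rfl, rfl⟩
    · exact Or.inr ⟨rfl, rfl⟩
    · exact absurd rfl hab
  have vmem : ∀ (r : G.Walk s t), r.IsPath → v ∈ r.support → u ∈ r.support := by
    intro r hr hvr
    obtain ⟨a, b, X, Y, hsup, hor⟩ := key r hr hvr
    rw [hsup]
    rcases hor with ⟨rfl, rfl⟩ | ⟨rfl, rfl⟩ <;> simp
  have umem : ∀ (r : G.Walk s t), r.IsPath → u ∈ r.support → v ∈ r.support := by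
    intro r hr hur
    obtain ⟨a, b, X, Y, hsup, hau, hub⟩ := walk_decomp r hur hus hut
    have hnd : (X ++ a :: u :: b :: Y).Nodup := hsup ▸ hr.support_nodup
    have hab : a ≠ b := by
      rw [List.nodup_append] at hnd
      have h2 := hnd.2.1
      simp only [List.nodup_cons, List.mem_cons, not_or] at h2
      exact h2.1.2.1
    have ha := hunb a hau.symm
    have hb := hunb b hub
    have hv : v = a ∨ v = b := by
      rcases ha with rfl | rfl <;> rcases hb with rfl | rfl
      · exact Or.inl rfl
      · exact Or.inl rfl
      · exact Or.inr rfl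
      · exact absurd rfl hab
    rw [hsup]
    rcases hv with rfl | rfl <;> simp
  have hT'track : IsTrackingSet G s t T' := by
    intro p q hp hq hfil
    apply hT p q hp hq
    have hmemv : v ∈ p.support ↔ v ∈ q.support := by
      constructor <;> intro h
      · have hm : u ∈ q.support.filter (· ∈ T') := by
          rw [← hfil]
          exact List.mem_filter.mpr ⟨vmem p hp h, by simpa using huT'⟩
        exact umem q hq (List.mem_filter.mp hm).1
      · have hm : u ∈ p.support.filter (· ∈ T') := by
          rw [hfil]
          exact List.mem_filter.mpr ⟨vmem q hq h, by simpa using huT'⟩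
        exact umem p hp (List.mem_filter.mp hm).1
    by_cases hvp : v ∈ p.support
    · have hvq : v ∈ q.support := hmemv.mp hvp
      obtain ⟨a, b, X, Y, hsp, horp⟩ := key p hp hvp
      obtain ⟨c, d, X', Y', hsq, horq⟩ := key q hq hvq
      have hndp : (X ++ a :: v :: b :: Y).Nodup := hsp ▸ hp.support_nodup
      have hndq : (X' ++ c :: v :: d :: Y').Nodup := hsq ▸ hq.support_nodup
      obtain ⟨e1p, e2p, huXp, hwXp, huYp, hwYp⟩ :=
        filter_decomp huT' hwT' hvT' hiff horp hndp
      obtain ⟨e1q, e2q, huXq, hwXq, huYq, hwYq⟩ :=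
        filter_decomp huT' hwT' hvT' hiff horq hndq
      rw [hsp, hsq] at hfil ⊢
      rw [e1p, e1q] at hfil
      obtain ⟨hXX, hac, hbd, hYY⟩ := middle_eq huw horp horq
        (fun h => huXp (List.mem_filter.mp h).1)
        (fun h => hwXp (List.mem_filter.mp h).1)
        (fun h => huXq (List.mem_filter.mp h).1)
        (fun h => hwXq (List.mem_filter.mp h).1)
        hfil
      rw [e2p, e2q, hXX, hac, hbd, hYY]
    · have hvq : v ∉ q.support := fun h => hvp (hmemv.mpr h)
      have hcomp : ∀ L : List V, v ∉ L →
          L.filter (· ∈ T) = (L.filter (· ∈ T')).filter (· ∈ T) := by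
        intro L hvL
        rw [List.filter_filter]
        refine (List.filter_congr fun x hx => ?_).symm
        by_cases hxT : x ∈ T
        · have hxT'2 : x ∈ T' := by
            rcases eq_or_ne x w with rfl | hxw
            · exact hwT'
            · exact (hiff x (fun h => hvL (h ▸ hx)) hxw).mpr hxT
          simp [hxT, hxT'2]
        · simp [hxT]
      rw [hcomp _ hvp, hcomp _ hvq, hfil]
  exact ⟨T', hT'track, fun T'' h => hcard.trans (hTmin T'' h), fun h => hvT' h.2⟩
end

section
/- Let G be a finite undirected simple graph with distinguished vertices s and t in which every edge lies on some s-t path. Let v ∉ {s,t} be a vertex of degree exactly 2 whose two neighbors a and b are adjacent to each other (so v lies in a triangle v,a,b). Then every tracking set of (G,s,t) contains v. -/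
open SimpleGraph

variable {V : Type*}

lemma walk_decomp_at {G : SimpleGraph V} {s t v : V} (p : G.Walk s t)
    (hv : v ∈ p.support) (hvs : v ≠ s) (hvt : v ≠ t) :
    ∃ (x y : V) (hxv : G.Adj x v) (hvy : G.Adj v y) (q1 : G.Walk s x) (q2 : G.Walk y t),
      p = q1.append (Walk.cons hxv (Walk.cons hvy q2)) := by
  induction p with
  | nil => simp at hv; exact (hvs hv).elim
  | @cons u c t h p' ih =>
    rw [Walk.support_cons, List.mem_cons] at hv
    have hv' : v ∈ p'.support := hv.resolve_left hvs
    by_cases hvc : v = c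
    · subst hvc
      cases p' with
      | nil => exact absurd rfl hvt
      | @cons _ y _ h2 p'' =>
        exact ⟨u, y, h, h2, Walk.nil, p'', rfl⟩
    · obtain ⟨x, y, hxv, hvy, q1, q2, hq⟩ := ih hv' hvc hvt
      exact ⟨x, y, hxv, hvy, Walk.cons h q1, q2, by rw [hq, Walk.cons_append]⟩

/-- If every edge lies on some s-t path and `v ∉ {s,t}` has degree exactly 2 with its two
neighbors adjacent to each other (a triangle), then every tracking set contains `v`. -/
theorem deg_two_triangle_vertex_in_every_tracking_set [Fintype V] [DecidableEq V]
    (G : SimpleGraph V) [DecidableRel G.Adj] (s t v a b : V)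
    (hE : ∀ e ∈ G.edgeSet, ∃ p : G.Walk s t, p.IsPath ∧ e ∈ p.edges)
    (hvs : v ≠ s) (hvt : v ≠ t) (hdeg : G.degree v = 2)
    (hab : a ≠ b) (hva : G.Adj v a) (hvb : G.Adj v b) (hadj : G.Adj a b)
    (T : Finset V) (hT : IsTrackingSet G s t T) :
    v ∈ T := by
  by_contra hvT
  obtain ⟨p, hp, he⟩ := hE s(v, a) hva
  have hvsup : v ∈ p.support := Walk.fst_mem_support_of_mem_edges p he
  obtain ⟨x, y, hxv, hvy, q1, q2, hq⟩ := walk_decomp_at p hvsup hvs hvt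
  -- support structure
  have hsup : p.support = q1.support ++ (v :: q2.support) := by
    rw [hq, Walk.support_append]
    simp
  have hnd : p.support.Nodup := hp.support_nodup
  rw [hsup] at hnd
  have hndapp := hnd
  rw [List.nodup_append] at hndapp
  obtain ⟨hnd1, hnd2, hdisj⟩ := hndapp
  -- x ≠ y
  have hxq1 : x ∈ q1.support := q1.end_mem_support
  have hyq : y ∈ v :: q2.support := List.mem_cons_of_mem _ q2.start_mem_support
  have hxy : x ≠ y := fun hh => hdisj x hxq1 y hyq hh
  -- neighborFinset v = {a,b}
  have hNF : G.neighborFinset v = {a, b} := by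
    refine (Finset.eq_of_subset_of_card_le ?_ ?_).symm
    · intro z hz
      simp only [Finset.mem_insert, Finset.mem_singleton] at hz
      rcases hz with rfl | rfl
      · exact (SimpleGraph.mem_neighborFinset _ _ _).2 hva
      · exact (SimpleGraph.mem_neighborFinset _ _ _).2 hvb
    · rw [Finset.card_pair hab]
      exact le_of_eq hdeg
  have hx : x ∈ ({a, b} : Finset V) := by
    rw [← hNF]; exact (SimpleGraph.mem_neighborFinset _ _ _).2 hxv.symm
  have hy : y ∈ ({a, b} : Finset V) := by
    rw [← hNF]; exact (SimpleGraph.mem_neighborFinset _ _ _).2 hvy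
  simp only [Finset.mem_insert, Finset.mem_singleton] at hx hy
  have hxyAdj : G.Adj x y := by
    rcases hx with rfl | rfl <;> rcases hy with rfl | rfl
    · exact absurd rfl hxy
    · exact hadj
    · exact hadj.symm
    · exact absurd rfl hxy
  set q : G.Walk s t := q1.append (Walk.cons hxyAdj q2) with hqdef
  have hsupq : q.support = q1.support ++ q2.support := by
    rw [hqdef, Walk.support_append]
    simp
  have hqpath : q.IsPath := by
    rw [Walk.isPath_def, hsupq]
    refine hnd.sublist ?_
    exact List.Sublist.append (List.Sublist.refl _) (List.sublist_cons_self _ _)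
  have hfil : p.support.filter (· ∈ T) = q.support.filter (· ∈ T) := by
    rw [hsup, hsupq, List.filter_append, List.filter_append, List.filter_cons_of_neg]
    simpa using hvT
  have hpq : p = q := hT p q hp hqpath hfil
  have hvq : v ∈ q.support := hpq ▸ hvsup
  rw [hsupq, List.mem_append] at hvq
  rcases hvq with h1 | h2
  · exact hdisj v h1 v List.mem_cons_self rfl
  · exact (List.nodup_cons.1 hnd2).1 h2
end

section
/- Let G be a finite undirected simple graph with distinguished vertices s and t in which every edge lies on some s-t path. Let u and v be distinct non-adjacent vertices with u,v ∉ {s,t}, both of degree exactly 2, that have the same two (distinct) neighbors a and b (so u,a,v,b form a 4-cycle). Then every tracking set of (G,s,t) contains u or contains v. -/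
open SimpleGraph

variable {V : Type*}

private lemma map_self_aux [DecidableEq V] (f : V → V) :
    ∀ l : List V, l.map f = l → ∀ x ∈ l, f x = x := by
  intro l
  induction l with
  | nil => simp
  | cons y ys ih =>
    intro h x hx
    simp only [List.map_cons, List.cons.injEq] at h
    rcases List.mem_cons.1 hx with rfl | hx
    · exact h.1
    · exact ih h.2 x hx

/-- If every edge lies on some s-t path and `u, v ∉ {s,t}` are distinct non-adjacent
vertices of degree exactly 2 sharing the same two neighbors `a` and `b` (a 4-cycle),
then every tracking set contains `u` or `v`. -/
theorem deg_two_square_vertex_in_every_tracking_set [Fintype V] [DecidableEq V]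
    (G : SimpleGraph V) [DecidableRel G.Adj] (s t u v a b : V)
    (hE : ∀ e ∈ G.edgeSet, ∃ p : G.Walk s t, p.IsPath ∧ e ∈ p.edges)
    (huv : u ≠ v) (hnadj : ¬G.Adj u v)
    (hus : u ≠ s) (hut : u ≠ t) (hvs : v ≠ s) (hvt : v ≠ t)
    (hdu : G.degree u = 2) (hdv : G.degree v = 2)
    (hab : a ≠ b)
    (hua : G.Adj u a) (hub : G.Adj u b) (hva : G.Adj v a) (hvb : G.Adj v b)
    (T : Finset V) (hT : IsTrackingSet G s t T) :
    u ∈ T ∨ v ∈ T := by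
  by_contra hcon
  push_neg at hcon
  obtain ⟨huT, hvT⟩ := hcon
  -- neighbors of u are exactly {a, b}
  have hNu : ∀ x, G.Adj u x → x = a ∨ x = b := by
    intro x hx
    have hsub : ({a, b} : Finset V) ⊆ G.neighborFinset u := by
      intro y hy
      simp only [Finset.mem_insert, Finset.mem_singleton] at hy
      rcases hy with rfl | rfl
      · exact (mem_neighborFinset G u y).2 hua
      · exact (mem_neighborFinset G u y).2 hub
    have hcard : ({a, b} : Finset V).card = 2 := by
      rw [Finset.card_insert_of_notMem (by simpa using hab), Finset.card_singleton]
    have heq : ({a, b} : Finset V) = G.neighborFinset u :=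
      Finset.eq_of_subset_of_card_le hsub (by rw [hcard, ← hdu]; rfl)
    have : x ∈ ({a, b} : Finset V) := by
      rw [heq]; exact (mem_neighborFinset G u x).2 hx
    simpa using this
  have hNv : ∀ x, G.Adj v x → x = a ∨ x = b := by
    intro x hx
    have hsub : ({a, b} : Finset V) ⊆ G.neighborFinset v := by
      intro y hy
      simp only [Finset.mem_insert, Finset.mem_singleton] at hy
      rcases hy with rfl | rfl
      · exact (mem_neighborFinset G v y).2 hva
      · exact (mem_neighborFinset G v y).2 hvb
    have hcard : ({a, b} : Finset V).card = 2 := by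
      rw [Finset.card_insert_of_notMem (by simpa using hab), Finset.card_singleton]
    have heq : ({a, b} : Finset V) = G.neighborFinset v :=
      Finset.eq_of_subset_of_card_le hsub (by rw [hcard, ← hdv]; rfl)
    have : x ∈ ({a, b} : Finset V) := by
      rw [heq]; exact (mem_neighborFinset G v x).2 hx
    simpa using this
  set f : V → V := fun x => Equiv.swap u v x with hf
  have hfu : f u = v := Equiv.swap_apply_left u v
  have hfv : f v = u := Equiv.swap_apply_right u v
  have hfother : ∀ x, x ≠ u → x ≠ v → f x = x := fun x h1 h2 =>
    Equiv.swap_apply_of_ne_of_ne h1 h2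
  have hau : a ≠ u := fun h => (h ▸ hua).ne' rfl
  have hav : a ≠ v := fun h => (h ▸ hva).ne' rfl
  have hbu : b ≠ u := fun h => (h ▸ hub).ne' rfl
  have hbv : b ≠ v := fun h => (h ▸ hvb).ne' rfl
  -- f is a graph homomorphism
  have hAdj : ∀ x y, G.Adj x y → G.Adj (f x) (f y) := by
    intro x y hxy
    by_cases hxu : x = u
    · subst hxu
      rcases hNu y hxy with rfl | rfl
      · rw [hfu, hfother _ hau hav]; exact hva
      · rw [hfu, hfother _ hbu hbv]; exact hvb
    · by_cases hxv : x = v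
      · subst hxv
        rcases hNv y hxy with rfl | rfl
        · rw [hfv, hfother _ hau hav]; exact hua
        · rw [hfv, hfother _ hbu hbv]; exact hub
      · rw [hfother _ hxu hxv]
        by_cases hyu : y = u
        · subst hyu
          rcases hNu x hxy.symm with rfl | rfl
          · rw [hfu]; exact hva.symm
          · rw [hfu]; exact hvb.symm
        · by_cases hyv : y = v
          · subst hyv
            rcases hNv x hxy.symm with rfl | rfl
            · rw [hfv]; exact hua.symm
            · rw [hfv]; exact hub.symm
          · rw [hfother _ hyu hyv]; exact hxy
  let hom : G →g G := ⟨f, fun h => hAdj _ _ h⟩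
  have hfinj : Function.Injective f := (Equiv.swap u v).injective
  -- get a path through edge (u,a)
  obtain ⟨p, hp, hpe⟩ := hE s(u, a) (G.mem_edgeSet.2 hua)
  have hup : u ∈ p.support := Walk.fst_mem_support_of_mem_edges p hpe
  have hfs : f s = s := hfother _ hus.symm hvs.symm
  have hft : f t = t := hfother _ hut.symm hvt.symm
  let q : G.Walk s t := (p.map hom).copy hfs hft
  have hq : q.IsPath := by
    rw [Walk.isPath_copy]
    exact Walk.map_isPath_of_injective hfinj hp
  have hqsupp : q.support = p.support.map f := by
    simp only [q, Walk.support_copy, Walk.support_map]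
    rfl
  -- filtered supports agree
  have hfilter : ∀ l : List V, (l.map f).filter (· ∈ T) = l.filter (· ∈ T) := by
    intro l
    induction l with
    | nil => rfl
    | cons x xs ih =>
      by_cases hxu : x = u
      · subst hxu
        simp only [List.map_cons, hfu, List.filter_cons]
        simp only [decide_eq_true_eq]
        rw [if_neg (by simpa using hvT), if_neg (by simpa using huT)]
        exact ih
      · by_cases hxv : x = v
        · subst hxv
          simp only [List.map_cons, hfv, List.filter_cons]
          simp only [decide_eq_true_eq]
          rw [if_neg (by simpa using huT), if_neg (by simpa using hvT)]
          exact ih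
        · simp only [List.map_cons, hfother _ hxu hxv, List.filter_cons]
          by_cases hxT : x ∈ T
          · rw [if_pos (by simpa using hxT), if_pos (by simpa using hxT), ih]
          · rw [if_neg (by simpa using hxT), if_neg (by simpa using hxT)]
            exact ih
  have hpq : p = q := by
    apply hT p q hp hq
    rw [hqsupp, hfilter]
  have : p.support.map f = p.support := by
    rw [← hqsupp, ← hpq]
  have := map_self_aux f p.support this u hup
  rw [hfu] at this
  exact huv this.symm
end

section
/- Let G be a finite undirected simple graph with distinguished vertices s and t satisfying all of the following: (i) every edge of G lies on some s-t path; (ii) no two adjacent vertices both have degree exactly 2; (iii) no vertex v ∉ {s,t} of degree exactly 2 has its two neighbors adjacent to each other; (iv) no two distinct non-adjacent vertices u,v ∉ {s,t}, both of degree exactly 2, have the same two neighbors. Then the set T = {w ∈ V(G) : deg(w) ≥ 3} \ {s,t} is a tracking set for (G,s,t). -/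
open SimpleGraph

variable {V : Type*}

set_option linter.unusedSectionVars false

section TrackingHelpers

section ListHelpers
variable {P : V → Bool}

/-- If a list decomposes as `A ++ y :: B` with `y ∉ A` and its filter starts with `y`,
then nothing in `A` satisfies the predicate and the filter of `B` is the rest. -/
lemma filter_first_split {A B r : List V} {y : V}
    (h : (A ++ y :: B).filter P = y :: r) (hy : y ∉ A) :
    A.filter P = [] ∧ B.filter P = r := by
  rw [List.filter_append] at h
  cases hA : A.filter P with
  | nil =>
    rw [hA, List.nil_append] at h
    have hPy : P y = true := by
      have : y ∈ (y :: B).filter P := h ▸ List.mem_cons_self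
      exact (List.mem_filter.mp this).2
    rw [List.filter_cons, if_pos hPy] at h
    exact ⟨rfl, List.cons_injective.eq_iff.mp h⟩
  | cons z zs =>
    exfalso
    rw [hA] at h
    have hz : z = y := by
      have := congrArg List.head? h
      simpa using this
    have : z ∈ A := List.mem_of_mem_filter (hA ▸ List.mem_cons_self)
    exact hy (hz ▸ this)

/-- The head of a nonempty filter lies in the first block it meets. -/
lemma head_filter_mem_left {A B r : List V} {y : V}
    (h : (A ++ B).filter P = y :: r) (hA : A.filter P ≠ []) : y ∈ A := by
  rw [List.filter_append] at h
  cases hA' : A.filter P with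
  | nil => exact absurd hA' hA
  | cons z zs =>
    rw [hA'] at h
    have hz : z = y := by
      have := congrArg List.head? h
      simpa using this
    exact hz ▸ List.mem_of_mem_filter (hA' ▸ List.mem_cons_self)

lemma filter_cons_cancel {a : V} {l l' : List V}
    (h : (a :: l).filter P = (a :: l').filter P) : l.filter P = l'.filter P := by
  rw [List.filter_cons, List.filter_cons] at h
  cases hPa : P a <;> simp [hPa] at h <;> [exact h; exact h]

end ListHelpers

section WalkHelpers
variable [DecidableEq V] {G : SimpleGraph V}

lemma SimpleGraph.Walk.support_tail_ne_nil {u v : V} (p : G.Walk u v) (h : u ≠ v) :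
    p.support.tail ≠ [] := by
  intro hnil
  have hs := p.support_eq_cons
  rw [hnil] at hs
  have := p.length_support
  rw [hs] at this
  simp at this
  exact h this.eq

lemma SimpleGraph.Walk.getLast_support_tail {u v : V} (p : G.Walk u v)
    (h : p.support.tail ≠ []) : p.support.tail.getLast h = v := by
  cases p with
  | nil => simp at h
  | cons r p' =>
    simp only [Walk.support_cons, List.tail_cons] at h ⊢
    exact p'.getLast_support

/-- For a walk with distinct endpoints, the tail of the support decomposes into
the interior followed by the end vertex. -/
lemma SimpleGraph.Walk.support_tail_decomp {u v : V} (p : G.Walk u v) (h : u ≠ v) :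
    p.support.tail = p.support.tail.dropLast ++ [v] := by
  have hne := p.support_tail_ne_nil h
  conv_lhs => rw [← List.dropLast_append_getLast hne]
  rw [p.getLast_support_tail hne]

lemma SimpleGraph.Walk.takeUntil_cons' {u v w c : V} {r : G.Adj u v} {p : G.Walk v w}
    (hc : c ∈ (Walk.cons r p).support) (hne : u ≠ c) (hc' : c ∈ p.support) :
    (Walk.cons r p).takeUntil c hc = Walk.cons r (p.takeUntil c hc') := by
  simp only [Walk.takeUntil]
  rw [dif_neg hne]

/-- A walk with support `[u, v]` is the single edge. -/
lemma SimpleGraph.Walk.support_pair {u v : V} (p : G.Walk u v) (h : p.support = [u, v]) :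
    ∃ (hadj : G.Adj u v), p = Walk.cons hadj Walk.nil := by
  cases p with
  | nil => simp at h
  | cons r p' =>
    cases p' with
    | nil => exact ⟨r, rfl⟩
    | cons r' p'' =>
      exfalso
      simp only [Walk.support_cons] at h
      rw [p''.support_eq_cons] at h
      simp at h

end WalkHelpers

section DegreeHelpers
variable [DecidableEq V] {G : SimpleGraph V}

/-- A nontrivial walk has a vertex (other than the endpoint) adjacent to its end. -/
lemma SimpleGraph.Walk.exists_adj_end {u v : V} (p : G.Walk u v) (h : ¬ p.Nil) :
    ∃ c ∈ p.support.dropLast, G.Adj c v := by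
  induction p with
  | nil => simp at h
  | cons r p' ih =>
    rename_i a b w
    cases p' with
    | nil => exact ⟨a, by simp, r⟩
    | cons r' p'' =>
      obtain ⟨c, hc, hadj⟩ := ih Walk.not_nil_cons
      refine ⟨c, ?_, hadj⟩
      rw [Walk.support_cons, List.dropLast_cons_of_ne_nil (Walk.support_ne_nil _)]
      exact List.mem_cons_of_mem _ hc

lemma SimpleGraph.Walk.exists_adj_start {u v : V} (p : G.Walk u v) (h : ¬ p.Nil) :
    ∃ c ∈ p.support.tail, G.Adj u c := by
  cases p with
  | nil => simp at h
  | cons r p' =>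
    rename_i b
    refine ⟨b, ?_, r⟩
    rw [Walk.support_cons, List.tail_cons, p'.support_eq_cons]
    exact List.mem_cons_self

/-- An interior vertex of a path has two distinct neighbors. -/
lemma SimpleGraph.Walk.interior_two_neighbors {u v x : V} {p : G.Walk u v}
    (hp : p.IsPath) (hx : x ∈ p.support) (hxu : x ≠ u) (hxv : x ≠ v) :
    ∃ a b : V, a ≠ b ∧ G.Adj x a ∧ G.Adj x b := by
  have hspec := p.take_spec hx
  have hnodup : ((p.takeUntil x hx).support ++ (p.dropUntil x hx).support.tail).Nodup := by
    rw [← Walk.support_append, hspec]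
    exact hp.support_nodup
  have hdisj := (List.nodup_append'.mp hnodup).2.2
  have htn : ¬ (p.takeUntil x hx).Nil := by
    intro hnil
    rw [Walk.nil_iff_length_eq] at hnil
    exact hxu (Walk.eq_of_length_eq_zero hnil).symm
  have hdn : ¬ (p.dropUntil x hx).Nil := by
    intro hnil
    rw [Walk.nil_iff_length_eq] at hnil
    exact hxv (Walk.eq_of_length_eq_zero hnil)
  obtain ⟨a, ha, hadja⟩ := (p.takeUntil x hx).exists_adj_end htn
  obtain ⟨b, hb, hadjb⟩ := (p.dropUntil x hx).exists_adj_start hdn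
  refine ⟨a, b, ?_, hadja.symm, hadjb⟩
  intro hab
  exact hdisj (List.dropLast_subset _ ha) (hab ▸ hb)

lemma degree_eq_two_of_interior [Fintype V] [DecidableRel G.Adj] {u v x : V}
    {p : G.Walk u v} (hp : p.IsPath) (hx : x ∈ p.support) (hxu : x ≠ u) (hxv : x ≠ v)
    (hdeg : G.degree x ≤ 2) : G.degree x = 2 := by
  obtain ⟨a, b, hab, ha, hb⟩ := Walk.interior_two_neighbors hp hx hxu hxv
  refine le_antisymm hdeg ?_
  have hsub : ({a, b} : Finset V) ⊆ G.neighborFinset x := by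
    intro z hz
    rw [Finset.mem_insert, Finset.mem_singleton] at hz
    rcases hz with rfl | rfl <;> simp [SimpleGraph.mem_neighborFinset, ha, hb]
  calc 2 = ({a, b} : Finset V).card := by rw [Finset.card_insert_of_notMem (by simpa using hab), Finset.card_singleton]
    _ ≤ (G.neighborFinset x).card := Finset.card_le_card hsub
    _ = G.degree x := rfl

lemma neighborFinset_eq_pair [Fintype V] [DecidableRel G.Adj] {x a b : V}
    (hab : a ≠ b) (ha : G.Adj x a) (hb : G.Adj x b) (hdeg : G.degree x ≤ 2) :
    G.neighborFinset x = {a, b} ∧ G.degree x = 2 := by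
  have hsub : ({a, b} : Finset V) ⊆ G.neighborFinset x := by
    intro z hz
    rw [Finset.mem_insert, Finset.mem_singleton] at hz
    rcases hz with rfl | rfl <;> simp [SimpleGraph.mem_neighborFinset, ha, hb]
  have hcard : ({a, b} : Finset V).card = 2 := by
    rw [Finset.card_insert_of_notMem (by simpa using hab), Finset.card_singleton]
  have heq := Finset.eq_of_subset_of_card_le hsub (by rw [hcard]; exact hdeg)
  exact ⟨heq.symm, by rw [SimpleGraph.degree, ← heq, hcard]⟩

end DegreeHelpers

section MoreWalkHelpers
variable [DecidableEq V] {G : SimpleGraph V}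

lemma SimpleGraph.Walk.support_split {s t c : V} (p : G.Walk s t) (hc : c ∈ p.support) :
    p.support = (p.takeUntil c hc).support ++ (p.dropUntil c hc).support.tail := by
  conv_lhs => rw [← p.take_spec hc]
  rw [Walk.support_append]

lemma SimpleGraph.Walk.support_tail_split {s t c : V} (p : G.Walk s t) (hc : c ∈ p.support) :
    p.support.tail = (p.takeUntil c hc).support.tail ++ (p.dropUntil c hc).support.tail := by
  have h := p.support_split hc
  rw [p.support_eq_cons, (p.takeUntil c hc).support_eq_cons, List.cons_append] at h
  exact List.cons_injective.eq_iff.mp h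

lemma SimpleGraph.Walk.end_not_mem_takeUntil {s t y : V} {p : G.Walk s t} (hp : p.IsPath)
    (hyp : y ∈ p.support) (hyt : y ≠ t) : t ∉ (p.takeUntil y hyp).support := by
  have hnodup : ((p.takeUntil y hyp).support ++ (p.dropUntil y hyp).support.tail).Nodup := by
    rw [← Walk.support_append, Walk.take_spec]
    exact hp.support_nodup
  have hdisj := (List.nodup_append'.mp hnodup).2.2
  have htd : t ∈ (p.dropUntil y hyp).support.tail := by
    have h2 := (p.dropUntil y hyp).end_mem_support
    rw [Walk.support_eq_cons] at h2
    rcases List.mem_cons.mp h2 with h2 | h2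
    · exact absurd h2.symm hyt
    · exact h2
  exact fun h => hdisj h htd

lemma SimpleGraph.Walk.end_not_mem_interior {s t y : V} {p : G.Walk s t} (hp : p.IsPath)
    (hyp : y ∈ p.support) : t ∉ (p.takeUntil y hyp).support.tail.dropLast := by
  by_cases hyt : y = t
  · subst hyt
    intro hmem
    set P1 := p.takeUntil y hyp with hP1
    have hnt : P1.support.tail.Nodup :=
      (List.nodup_cons.mp (by rw [← P1.support_eq_cons]; exact (hp.takeUntil hyp).support_nodup)).2
    have htail : P1.support.tail ≠ [] := by
      intro h
      rw [h] at hmem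
      simp at hmem
    have hlast : P1.support.tail.getLast htail = y := P1.getLast_support_tail htail
    have hdecomp := List.dropLast_append_getLast htail
    rw [hlast] at hdecomp
    rw [← hdecomp] at hnt
    have hdisj := (List.nodup_append'.mp hnt).2.2
    exact hdisj hmem (List.mem_singleton_self _)
  · intro h
    exact Walk.end_not_mem_takeUntil hp hyp hyt
      (List.tail_suffix _ |>.subset (List.dropLast_subset _ h))

lemma SimpleGraph.Walk.length_takeUntil_lt' {s t y : V} (p : G.Walk s t)
    (hyp : y ∈ p.support) (hyt : y ≠ t) : (p.takeUntil y hyp).length < p.length := by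
  have hspec := congrArg Walk.length (p.take_spec hyp)
  rw [Walk.length_append] at hspec
  have hd : (p.dropUntil y hyp).length ≠ 0 := fun h0 => hyt (Walk.eq_of_length_eq_zero h0)
  omega

lemma SimpleGraph.Walk.takeUntil_cons_ne {s t t' c x1 y1 : V} {G : SimpleGraph V}
    (hxy : x1 ≠ y1) {r1 : G.Adj s x1} {p' : G.Walk x1 t} {r2 : G.Adj s y1} {q' : G.Walk y1 t'}
    (hc1 : c ∈ (Walk.cons r1 p').support) (hc2 : c ∈ (Walk.cons r2 q').support)
    (hcs : s ≠ c) (hc1' : c ∈ p'.support) (hc2' : c ∈ q'.support) :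
    (Walk.cons r1 p').takeUntil c hc1 ≠ (Walk.cons r2 q').takeUntil c hc2 := by
  rw [Walk.takeUntil_cons' hc1 hcs hc1', Walk.takeUntil_cons' hc2 hcs hc2']
  intro h
  have h2 := congrArg Walk.support h
  rw [Walk.support_cons, Walk.support_cons, Walk.support_eq_cons (p'.takeUntil c hc1'),
    Walk.support_eq_cons (q'.takeUntil c hc2')] at h2
  injection h2 with h3 h4
  injection h4 with h5 h6
  exact hxy h5

/-- If the first tracked vertex along `p` (after `s`) is `y`, then the part of the
walk up to `y` contains exactly `y` as tracked vertex in its tail. -/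
lemma SimpleGraph.Walk.filter_takeUntil {T : Finset V} {s t y : V} {rest : List V}
    (p : G.Walk s t) (hp : p.IsPath) (hyp : y ∈ p.support) (hsy : s ≠ y)
    (hfil : p.support.tail.filter (· ∈ T) = y :: rest) :
    (p.takeUntil y hyp).support.tail.filter (· ∈ T) = [y] := by
  have hyT : (y ∈ T) := by
    have hy : y ∈ p.support.tail.filter (· ∈ T) := hfil ▸ List.mem_cons_self
    exact of_decide_eq_true (List.mem_filter.mp hy).2
  have hsplit := p.support_tail_split hyp
  have hdecomp := (p.takeUntil y hyp).support_tail_decomp hsy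
  have hynint : y ∉ (p.takeUntil y hyp).support.tail.dropLast := by
    have hnt0 : (p.takeUntil y hyp).support.Nodup := (hp.takeUntil hyp).support_nodup
    rw [Walk.support_eq_cons] at hnt0
    have hnt : (p.takeUntil y hyp).support.tail.Nodup := (List.nodup_cons.mp hnt0).2
    rw [hdecomp] at hnt
    exact fun h => (List.nodup_append'.mp hnt).2.2 h (List.mem_singleton_self _)
  have hfil2 : ((p.takeUntil y hyp).support.tail.dropLast ++
      y :: (p.dropUntil y hyp).support.tail).filter (· ∈ T) = y :: rest := by
    rw [← List.singleton_append, ← List.append_assoc, ← hdecomp, ← hsplit]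
    exact hfil
  obtain ⟨h1, _⟩ := filter_first_split hfil2 hynint
  rw [hdecomp, List.filter_append, h1, List.nil_append, List.filter_cons,
    if_pos (decide_eq_true hyT)]
  rfl

end MoreWalkHelpers

section Extraction
variable [DecidableEq V] {G : SimpleGraph V}

/-- Key extraction lemma: from two distinct paths with the same tracked sequence, one can
extract two distinct internally disjoint paths between common endpoints whose interiors
contain no tracked vertices and avoid the endpoints of the original paths. -/
lemma extract_detour (T : Finset V) :
    ∀ (n : ℕ) {s t : V} (p q : G.Walk s t), p.length + q.length ≤ n →
      p.IsPath → q.IsPath → p ≠ q →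
      p.support.filter (· ∈ T) = q.support.filter (· ∈ T) →
      ∃ (u v : V) (P Q : G.Walk u v), P.IsPath ∧ Q.IsPath ∧ P ≠ Q ∧
        (∀ w ∈ P.support.tail.dropLast, w ∉ T ∧ w ∈ p.support ∧ w ≠ s ∧ w ≠ t) ∧
        (∀ w ∈ Q.support.tail.dropLast, w ∉ T ∧ w ∈ q.support ∧ w ≠ s ∧ w ≠ t) ∧
        (∀ w ∈ P.support.tail.dropLast, w ∉ Q.support.tail.dropLast) := by
  intro n
  induction n with
  | zero =>
    intro s t p q hn hp hq hne hf
    have hp0 : p.length = 0 := by omega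
    have hst : s = t := Walk.eq_of_length_eq_zero hp0
    subst hst
    rw [(Walk.isPath_iff_eq_nil (p := p)).mp hp, (Walk.isPath_iff_eq_nil (p := q)).mp hq] at hne
    exact absurd rfl hne
  | succ n ih =>
    intro s t p q hn hp hq hne hf
    cases p with
    | nil =>
      rw [(Walk.isPath_iff_eq_nil (p := q)).mp hq] at hne
      exact absurd rfl hne
    | cons rp p' =>
      rename_i x1
      cases q with
      | nil => simpa using Walk.isPath_iff_eq_nil.mp hp
      | cons rq q' =>
        rename_i y1
        obtain ⟨hp', hsp'⟩ := (Walk.cons_isPath_iff _ _).mp hp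
        obtain ⟨hq', hsq'⟩ := (Walk.cons_isPath_iff _ _).mp hq
        have hft : p'.support.filter (· ∈ T) = q'.support.filter (· ∈ T) := by
          apply filter_cons_cancel (a := s)
          simpa [Walk.support_cons] using hf
        have hlenp : (Walk.cons rp p').length = p'.length + 1 := Walk.length_cons _ _
        have hlenq : (Walk.cons rq q').length = q'.length + 1 := Walk.length_cons _ _
        by_cases hxy : x1 = y1
        · -- same first edge: recurse on the tails
          subst hxy
          have hne' : p' ≠ q' := by
            rintro rfl
            exact hne rfl
          obtain ⟨u, v, P, Q, hP, hQ, hPQ, hPint, hQint, hdisj⟩ :=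
            ih p' q' (by omega) hp' hq' hne' hft
          refine ⟨u, v, P, Q, hP, hQ, hPQ, ?_, ?_, hdisj⟩
          · intro w hw
            obtain ⟨h1, h2, h3, h4⟩ := hPint w hw
            exact ⟨h1, by rw [Walk.support_cons]; exact List.mem_cons_of_mem _ h2,
              fun hws => hsp' (hws ▸ h2), h4⟩
          · intro w hw
            obtain ⟨h1, h2, h3, h4⟩ := hQint w hw
            exact ⟨h1, by rw [Walk.support_cons]; exact List.mem_cons_of_mem _ h2,
              fun hws => hsq' (hws ▸ h2), h4⟩
        · -- different first edges
          -- find c: the first vertex of q' lying on p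
          have htp : t ∈ (Walk.cons rp p').support := Walk.end_mem_support _
          have hlne : q'.support.filter (· ∈ (Walk.cons rp p').support) ≠ [] := by
            have hmemt : t ∈ q'.support.filter (· ∈ (Walk.cons rp p').support) :=
              List.mem_filter.mpr ⟨q'.end_mem_support, decide_eq_true htp⟩
            exact List.ne_nil_of_mem hmemt
          obtain ⟨c, r, hcr⟩ : ∃ c r,
              q'.support.filter (· ∈ (Walk.cons rp p').support) = c :: r := by
            cases h : q'.support.filter (· ∈ (Walk.cons rp p').support) with
            | nil => exact absurd h hlne
            | cons c r => exact ⟨c, r, rfl⟩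
          have hcmem := hcr ▸ (List.mem_cons_self (a := c) (l := r))
          have hcq' : c ∈ q'.support := List.mem_of_mem_filter hcmem
          have hcp : c ∈ (Walk.cons rp p').support :=
            of_decide_eq_true (List.mem_filter.mp hcmem).2
          have hcs : c ≠ s := fun h => hsq' (h ▸ hcq')
          have hcp' : c ∈ p'.support := by
            rcases List.mem_cons.mp (by rwa [Walk.support_cons] at hcp) with h | h
            · exact absurd h hcs
            · exact h
          have hcq : c ∈ (Walk.cons rq q').support := by
            rw [Walk.support_cons]; exact List.mem_cons_of_mem _ hcq'
          -- decompositions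
          have hq'tail : q'.support = ((Walk.cons rq q').takeUntil c hcq).support.tail ++
              ((Walk.cons rq q').dropUntil c hcq).support.tail := by
            have := (Walk.cons rq q').support_tail_split hcq
            rwa [Walk.support_cons, List.tail_cons] at this
          have hp'tail : p'.support = ((Walk.cons rp p').takeUntil c hcp).support.tail ++
              ((Walk.cons rp p').dropUntil c hcp).support.tail := by
            have := (Walk.cons rp p').support_tail_split hcp
            rwa [Walk.support_cons, List.tail_cons] at this
          have hQd := ((Walk.cons rq q').takeUntil c hcq).support_tail_decomp hcs.symm
          have hPd := ((Walk.cons rp p').takeUntil c hcp).support_tail_decomp hcs.symm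
          have hQ1path : ((Walk.cons rq q').takeUntil c hcq).IsPath := hq.takeUntil hcq
          have hP1path : ((Walk.cons rp p').takeUntil c hcp).IsPath := hp.takeUntil hcp
          have hcnotintQ : c ∉ ((Walk.cons rq q').takeUntil c hcq).support.tail.dropLast := by
            have hnt0 := hQ1path.support_nodup
            rw [Walk.support_eq_cons] at hnt0
            have hnt := (List.nodup_cons.mp hnt0).2
            rw [hQd] at hnt
            exact fun h => (List.nodup_append'.mp hnt).2.2 h (List.mem_singleton_self _)
          -- interior of Q1 avoids p entirely
          have hintQ_not_p : ∀ w ∈ ((Walk.cons rq q').takeUntil c hcq).support.tail.dropLast,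
              w ∉ (Walk.cons rp p').support := by
            have hdec : q'.support = ((Walk.cons rq q').takeUntil c hcq).support.tail.dropLast ++
                c :: ((Walk.cons rq q').dropUntil c hcq).support.tail := by
              rw [hq'tail]
              conv_lhs => rw [hQd]
              rw [List.append_assoc, List.singleton_append]
            have hsplit := filter_first_split (P := (· ∈ (Walk.cons rp p').support))
              (by rw [← hdec]; exact hcr) hcnotintQ
            intro w hw hwp
            exact (List.filter_eq_nil_iff.mp hsplit.1) w hw (decide_eq_true hwp)
          -- t is not in the interior of P1, and interiors sit inside supports
          have htP : t ∉ ((Walk.cons rp p').takeUntil c hcp).support.tail.dropLast :=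
            Walk.end_not_mem_interior hp hcp
          have hintP_sub : ∀ w ∈ ((Walk.cons rp p').takeUntil c hcp).support.tail.dropLast,
              w ∈ p'.support := by
            intro w hw
            rw [hp'tail]
            exact List.mem_append_left _ (List.dropLast_subset _ hw)
          have hintQ_sub : ∀ w ∈ ((Walk.cons rq q').takeUntil c hcq).support.tail.dropLast,
              w ∈ q'.support := by
            intro w hw
            rw [hq'tail]
            exact List.mem_append_left _ (List.dropLast_subset _ hw)
          by_cases hA : ∀ w ∈ ((Walk.cons rp p').takeUntil c hcp).support.tail.dropLast, w ∉ T
          · -- Case A : interior of P1 is tracker-free; we found our two detour paths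
            refine ⟨s, c, (Walk.cons rp p').takeUntil c hcp, (Walk.cons rq q').takeUntil c hcq,
              hP1path, hQ1path, Walk.takeUntil_cons_ne hxy hcp hcq hcs.symm hcp' hcq', ?_, ?_, ?_⟩
            · intro w hw
              have hwp' := hintP_sub w hw
              exact ⟨hA w hw, by rw [Walk.support_cons]; exact List.mem_cons_of_mem _ hwp',
                fun hws => hsp' (hws ▸ hwp'), fun hwt => htP (hwt ▸ hw)⟩
            · intro w hw
              have hwq' := hintQ_sub w hw
              have hwnp := hintQ_not_p w hw
              refine ⟨?_, by rw [Walk.support_cons]; exact List.mem_cons_of_mem _ hwq',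
                fun hws => hsq' (hws ▸ hwq'), fun hwt => hwnp (hwt ▸ htp)⟩
              intro hwT
              have : w ∈ q'.support.filter (· ∈ T) :=
                List.mem_filter.mpr ⟨hwq', decide_eq_true hwT⟩
              rw [← hft] at this
              have := List.mem_of_mem_filter this
              exact hwnp (by rw [Walk.support_cons]; exact List.mem_cons_of_mem _ this)
            · intro w hw hwq
              exact hintQ_not_p w hwq
                (by rw [Walk.support_cons]; exact List.mem_cons_of_mem _ (hintP_sub w hw))
          · -- Case B : a tracker inside P1; split both paths at the first tracker y
            push_neg at hA
            obtain ⟨w, hwint, hwT⟩ := hA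
            have hfp'ne : p'.support.filter (· ∈ T) ≠ [] := fun h =>
              (List.filter_eq_nil_iff.mp h) w (hintP_sub w hwint) (decide_eq_true hwT)
            obtain ⟨y, rest, hyr⟩ : ∃ y rest, p'.support.filter (· ∈ T) = y :: rest := by
              cases h : p'.support.filter (· ∈ T) with
              | nil => exact absurd h hfp'ne
              | cons y rest => exact ⟨y, rest, rfl⟩
            have hymem := hyr ▸ (List.mem_cons_self (a := y) (l := rest))
            have hy_p' : y ∈ p'.support := List.mem_of_mem_filter hymem
            have hy_q' : y ∈ q'.support := by
              have : y ∈ q'.support.filter (· ∈ T) := by rw [← hft]; exact hymem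
              exact List.mem_of_mem_filter this
            have hy_intP : y ∈ ((Walk.cons rp p').takeUntil c hcp).support.tail.dropLast := by
              have hdecP : p'.support =
                  ((Walk.cons rp p').takeUntil c hcp).support.tail.dropLast ++
                  (c :: ((Walk.cons rp p').dropUntil c hcp).support.tail) := by
                rw [hp'tail]
                conv_lhs => rw [hPd]
                rw [List.append_assoc, List.singleton_append]
              apply head_filter_mem_left (by rw [← hdecP]; exact hyr)
              exact List.ne_nil_of_mem (List.mem_filter.mpr ⟨hwint, decide_eq_true hwT⟩)
            have hys : y ≠ s := fun h => hsp' (h ▸ hy_p')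
            have hyt : y ≠ t := fun h => htP (h ▸ hy_intP)
            have hyp : y ∈ (Walk.cons rp p').support := by
              rw [Walk.support_cons]; exact List.mem_cons_of_mem _ hy_p'
            have hyq : y ∈ (Walk.cons rq q').support := by
              rw [Walk.support_cons]; exact List.mem_cons_of_mem _ hy_q'
            -- the two truncated walks have equal tracked sequences
            have hfiltp : (Walk.cons rp p').support.tail.filter (· ∈ T) = y :: rest := by
              rw [Walk.support_cons, List.tail_cons]; exact hyr
            have hfiltq : (Walk.cons rq q').support.tail.filter (· ∈ T) = y :: rest := by
              rw [Walk.support_cons, List.tail_cons, ← hft]; exact hyr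
            have hfa := (Walk.cons rp p').filter_takeUntil hp hyp hys.symm hfiltp
            have hfb := (Walk.cons rq q').filter_takeUntil hq hyq hys.symm hfiltq
            have hfeq : ((Walk.cons rp p').takeUntil y hyp).support.filter (· ∈ T) =
                ((Walk.cons rq q').takeUntil y hyq).support.filter (· ∈ T) := by
              rw [Walk.support_eq_cons ((Walk.cons rp p').takeUntil y hyp),
                Walk.support_eq_cons ((Walk.cons rq q').takeUntil y hyq),
                List.filter_cons, List.filter_cons, hfa, hfb]
            have hy_p'' : y ∈ p'.support := hy_p'
            have hltp := (Walk.cons rp p').length_takeUntil_lt' hyp hyt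
            have hltq := (Walk.cons rq q').length_takeUntil_lt' hyq hyt
            have hnecut : (Walk.cons rp p').takeUntil y hyp ≠
                (Walk.cons rq q').takeUntil y hyq :=
              Walk.takeUntil_cons_ne hxy hyp hyq hys.symm hy_p' hy_q'
            obtain ⟨u, v, P, Q, hP, hQ, hPQ, hPint, hQint, hdisj⟩ :=
              ih ((Walk.cons rp p').takeUntil y hyp) ((Walk.cons rq q').takeUntil y hyq)
                (by omega) (hp.takeUntil hyp) (hq.takeUntil hyq) hnecut hfeq
            refine ⟨u, v, P, Q, hP, hQ, hPQ, ?_, ?_, hdisj⟩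
            · intro w' hw'
              obtain ⟨h1, h2, h3, h4⟩ := hPint w' hw'
              refine ⟨h1, (Walk.support_takeUntil_subset _ hyp) h2, h3, ?_⟩
              intro hwt
              exact Walk.end_not_mem_takeUntil hp hyp hyt (hwt ▸ h2)
            · intro w' hw'
              obtain ⟨h1, h2, h3, h4⟩ := hQint w' hw'
              refine ⟨h1, (Walk.support_takeUntil_subset _ hyq) h2, h3, ?_⟩
              intro hwt
              exact Walk.end_not_mem_takeUntil hq hyq hyt (hwt ▸ h2)

end Extraction

section Final
variable [DecidableEq V] {G : SimpleGraph V}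

lemma interior_spec {u v : V} {R : G.Walk u v} (hR : R.IsPath) {w : V}
    (hw : w ∈ R.support.tail.dropLast) : w ∈ R.support ∧ w ≠ u ∧ w ≠ v := by
  have huv : u ≠ v := by
    rintro rfl
    rw [(Walk.isPath_iff_eq_nil (p := R)).mp hR] at hw
    simp at hw
  have hnodup := hR.support_nodup
  rw [R.support_eq_cons] at hnodup
  have h1 : w ∈ R.support.tail := List.dropLast_subset _ hw
  refine ⟨(List.tail_suffix _).subset h1, fun h => (List.nodup_cons.mp hnodup).1 (h ▸ h1), ?_⟩
  have hdec := R.support_tail_decomp huv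
  have hnt := (List.nodup_cons.mp hnodup).2
  rw [hdec] at hnt
  intro h
  exact (List.nodup_append'.mp hnt).2.2 hw (by rw [h]; exact List.mem_singleton_self v)

lemma two_interior_false [Fintype V] [DecidableRel G.Adj]
    (h2 : ∀ u v, G.Adj u v → ¬(G.degree u = 2 ∧ G.degree v = 2))
    {u v : V} {R : G.Walk u v} (hR : R.IsPath) {x z : V} {rest : List V}
    (hint : R.support.tail.dropLast = x :: z :: rest)
    (hdeg : ∀ w ∈ R.support.tail.dropLast, G.degree w ≤ 2) : False := by
  have hchain : List.IsChain G.Adj R.support := Walk.isChain_adj_support R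
  have hinf : R.support.tail.dropLast <:+: R.support :=
    (List.dropLast_prefix _).isInfix.trans (List.tail_suffix _).isInfix
  have hc2 := hchain.infix hinf
  rw [hint] at hc2
  have hadj : G.Adj x z := (List.isChain_cons_cons.mp hc2).1
  have hxmem : x ∈ R.support.tail.dropLast := by rw [hint]; exact List.mem_cons_self
  have hzmem : z ∈ R.support.tail.dropLast := by
    rw [hint]; exact List.mem_cons_of_mem _ (List.mem_cons_self)
  obtain ⟨hxs, hxu, hxv⟩ := interior_spec hR hxmem
  obtain ⟨hzs, hzu, hzv⟩ := interior_spec hR hzmem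
  exact h2 x z hadj ⟨degree_eq_two_of_interior hR hxs hxu hxv (hdeg x hxmem),
    degree_eq_two_of_interior hR hzs hzu hzv (hdeg z hzmem)⟩

end Final


end TrackingHelpers

/-- In a reduced graph (every edge on an s-t path, no two adjacent degree-2 vertices,
no degree-2 vertex `∉ {s,t}` in a triangle, no two non-adjacent degree-2 vertices
`∉ {s,t}` sharing the same two neighbors), the set of all vertices of degree at least 3,
except `s` and `t`, is a tracking set. -/
theorem high_degree_vertices_tracking_set [Fintype V] [DecidableEq V]
    (G : SimpleGraph V) [DecidableRel G.Adj] (s t : V)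
    (h1 : ∀ e ∈ G.edgeSet, ∃ p : G.Walk s t, p.IsPath ∧ e ∈ p.edges)
    (h2 : ∀ u v, G.Adj u v → ¬(G.degree u = 2 ∧ G.degree v = 2))
    (h3 : ∀ v, v ≠ s → v ≠ t → G.degree v = 2 →
      ∀ a b, a ≠ b → G.Adj v a → G.Adj v b → ¬G.Adj a b)
    (h4 : ∀ u v, u ≠ v → ¬G.Adj u v → u ≠ s → u ≠ t → v ≠ s → v ≠ t →
      G.degree u = 2 → G.degree v = 2 → G.neighborFinset u ≠ G.neighborFinset v) :
    IsTrackingSet G s t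
      ((Finset.univ.filter (fun w => 3 ≤ G.degree w)) \ {s, t}) := by
  classical
  set T : Finset V := (Finset.univ.filter (fun w => 3 ≤ G.degree w)) \ {s, t} with hT
  intro p q hp hq hfil
  by_contra hne
  obtain ⟨u, v, P, Q, hP, hQ, hPQ, hPint, hQint, hdisj⟩ :=
    extract_detour T (p.length + q.length) p q le_rfl hp hq hne hfil
  have hnotT : ∀ {w : V}, w ∉ T → w ≠ s → w ≠ t → G.degree w ≤ 2 := by
    intro w hw hws hwt
    by_contra hd
    push_neg at hd
    apply hw
    rw [hT]
    simp only [Finset.mem_sdiff, Finset.mem_filter, Finset.mem_univ, true_and,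
      Finset.mem_insert, Finset.mem_singleton]
    exact ⟨by omega, by tauto⟩
  have hPdeg : ∀ w ∈ P.support.tail.dropLast, G.degree w ≤ 2 := by
    intro w hw
    obtain ⟨h1, _, h3', h4'⟩ := hPint w hw
    exact hnotT h1 h3' h4'
  have hQdeg : ∀ w ∈ Q.support.tail.dropLast, G.degree w ≤ 2 := by
    intro w hw
    obtain ⟨h1, _, h3', h4'⟩ := hQint w hw
    exact hnotT h1 h3' h4'
  have huv : u ≠ v := by
    rintro rfl
    rw [(Walk.isPath_iff_eq_nil (p := P)).mp hP, (Walk.isPath_iff_eq_nil (p := Q)).mp hQ] at hPQ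
    exact hPQ rfl
  have hPsup : P.support = u :: (P.support.tail.dropLast ++ [v]) := by
    rw [← P.support_tail_decomp huv]
    exact P.support_eq_cons
  have hQsup : Q.support = u :: (Q.support.tail.dropLast ++ [v]) := by
    rw [← Q.support_tail_decomp huv]
    exact Q.support_eq_cons
  rcases hIP : P.support.tail.dropLast with _ | ⟨x, xs⟩
  · rcases hIQ : Q.support.tail.dropLast with _ | ⟨y, ys⟩
    · -- both are single edges: they are equal, contradiction
      rw [hIP] at hPsup
      rw [hIQ] at hQsup
      obtain ⟨ha1, hPe⟩ := P.support_pair (by simpa using hPsup)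
      obtain ⟨ha2, hQe⟩ := Q.support_pair (by simpa using hQsup)
      exact hPQ (by rw [hPe, hQe])
    · rcases ys with _ | ⟨y2, ys2⟩
      · -- P is an edge, Q has a single interior vertex: contradicts h3
        rw [hIP] at hPsup
        rw [hIQ] at hQsup
        obtain ⟨ha1, hPe⟩ := P.support_pair (by simpa using hPsup)
        have hchainQ : List.IsChain G.Adj Q.support := Walk.isChain_adj_support Q
        rw [hQsup] at hchainQ
        simp only [List.singleton_append, List.cons_append, List.nil_append] at hchainQ
        have haduy : G.Adj u y := (List.isChain_cons_cons.mp hchainQ).1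
        have hadyv : G.Adj y v := (List.isChain_cons_cons.mp (List.isChain_cons_cons.mp hchainQ).2).1
        have hymem : y ∈ Q.support.tail.dropLast := by
          rw [hIQ]; exact List.mem_cons_self
        obtain ⟨_, _, hys, hyt⟩ := hQint y hymem
        have hdegy := (neighborFinset_eq_pair huv haduy.symm hadyv
          (hQdeg y hymem)).2
        exact h3 y hys hyt hdegy u v huv haduy.symm hadyv ha1
      · exact two_interior_false h2 hQ hIQ hQdeg
  · rcases xs with _ | ⟨x2, xs2⟩
    · rcases hIQ : Q.support.tail.dropLast with _ | ⟨y, ys⟩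
      · -- Q is an edge, P has a single interior vertex: contradicts h3
        rw [hIP] at hPsup
        rw [hIQ] at hQsup
        obtain ⟨ha2, hQe⟩ := Q.support_pair (by simpa using hQsup)
        have hchainP : List.IsChain G.Adj P.support := Walk.isChain_adj_support P
        rw [hPsup] at hchainP
        simp only [List.singleton_append, List.cons_append, List.nil_append] at hchainP
        have hadux : G.Adj u x := (List.isChain_cons_cons.mp hchainP).1
        have hadxv : G.Adj x v := (List.isChain_cons_cons.mp (List.isChain_cons_cons.mp hchainP).2).1
        have hxmem : x ∈ P.support.tail.dropLast := by
          rw [hIP]; exact List.mem_cons_self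
        obtain ⟨_, _, hxs, hxt⟩ := hPint x hxmem
        have hdegx := (neighborFinset_eq_pair huv hadux.symm hadxv
          (hPdeg x hxmem)).2
        exact h3 x hxs hxt hdegx u v huv hadux.symm hadxv ha2
      · rcases ys with _ | ⟨y2, ys2⟩
        · -- both have a single interior vertex: contradicts h4
          rw [hIP] at hPsup
          rw [hIQ] at hQsup
          have hchainP : List.IsChain G.Adj P.support := Walk.isChain_adj_support P
          rw [hPsup] at hchainP
          simp only [List.singleton_append, List.cons_append, List.nil_append] at hchainP
          have hadux : G.Adj u x := (List.isChain_cons_cons.mp hchainP).1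
          have hadxv : G.Adj x v := (List.isChain_cons_cons.mp (List.isChain_cons_cons.mp hchainP).2).1
          have hchainQ : List.IsChain G.Adj Q.support := Walk.isChain_adj_support Q
          rw [hQsup] at hchainQ
          simp only [List.singleton_append, List.cons_append, List.nil_append] at hchainQ
          have haduy : G.Adj u y := (List.isChain_cons_cons.mp hchainQ).1
          have hadyv : G.Adj y v := (List.isChain_cons_cons.mp (List.isChain_cons_cons.mp hchainQ).2).1
          have hxmem : x ∈ P.support.tail.dropLast := by
            rw [hIP]; exact List.mem_cons_self
          have hymem : y ∈ Q.support.tail.dropLast := by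
            rw [hIQ]; exact List.mem_cons_self
          obtain ⟨_, _, hxs, hxt⟩ := hPint x hxmem
          obtain ⟨_, _, hys, hyt⟩ := hQint y hymem
          obtain ⟨hnbx, hdegx⟩ := neighborFinset_eq_pair huv hadux.symm hadxv (hPdeg x hxmem)
          obtain ⟨hnby, hdegy⟩ := neighborFinset_eq_pair huv haduy.symm hadyv (hQdeg y hymem)
          have hxy : x ≠ y := by
            have := hdisj x hxmem
            rw [hIQ] at this
            simpa using this
          have hnadj : ¬ G.Adj x y := by
            intro hadj
            have hmem : y ∈ G.neighborFinset x := (SimpleGraph.mem_neighborFinset _ _ _).mpr hadj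
            rw [hnbx] at hmem
            obtain ⟨_, hyu, hyv⟩ := interior_spec hQ hymem
            rcases Finset.mem_insert.mp hmem with h | h
            · exact hyu h
            · exact hyv (Finset.mem_singleton.mp h)
          exact h4 x y hxy hnadj hxs hxt hys hyt hdegx hdegy (hnbx.trans hnby.symm)
        · exact two_interior_false h2 hQ hIQ hQdeg
    · exact two_interior_false h2 hP hIP hPdeg
end

section
/- Let G be a finite undirected simple graph with distinguished vertices s and t in which every edge lies on some s-t path, and let T be a tracking set for (G,s,t). Then T is a feedback vertex set of G, i.e., every simple cycle of G contains a vertex of T. -/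
open SimpleGraph

variable {V : Type*}

section Aux

variable {G : SimpleGraph V}

/-- A path from a vertex to itself has no edges. -/
lemma aux_loop_edges_nil {a : V} {r : G.Walk a a} (h : r.IsPath) : r.edges = [] := by
  cases r with
  | nil => rfl
  | cons h' r' =>
    rw [SimpleGraph.Walk.cons_isPath_iff] at h
    exact (h.2 r'.end_mem_support).elim

/-- Decompose a walk at the first vertex belonging to a set `S` (assuming some support vertex
is in `S`). -/
lemma aux_exists_first_mem {x y : V} (p : G.Walk x y) (S : Set V) (w : V)
    (hw : w ∈ p.support) (hwS : w ∈ S) :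
    ∃ a, a ∈ S ∧ ∃ (q : G.Walk x a) (r : G.Walk a y),
      p = q.append r ∧ ∀ z ∈ q.support, z ∈ S → z = a := by
  induction p with
  | nil =>
    simp only [SimpleGraph.Walk.support_nil, List.mem_singleton] at hw
    subst hw
    exact ⟨w, hwS, SimpleGraph.Walk.nil, SimpleGraph.Walk.nil, rfl, by
      intro z hz _; simpa using hz⟩
  | @cons x u y h' p' ih =>
    by_cases hx : x ∈ S
    · exact ⟨x, hx, SimpleGraph.Walk.nil, SimpleGraph.Walk.cons h' p', rfl, by
        intro z hz _; simpa using hz⟩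
    · have hw' : w ∈ p'.support := by
        rw [SimpleGraph.Walk.support_cons, List.mem_cons] at hw
        rcases hw with rfl | hw
        · exact absurd hwS hx
        · exact hw
      obtain ⟨a, haS, q', r', heq, hprop⟩ := ih hw'
      refine ⟨a, haS, SimpleGraph.Walk.cons h' q', r', by rw [heq]; rfl, ?_⟩
      intro z hz hzS
      rw [SimpleGraph.Walk.support_cons, List.mem_cons] at hz
      rcases hz with rfl | hz
      · exact absurd hzS hx
      · exact hprop z hz hzS

/-- The start vertex of a nontrivial closed walk appears in the tail of its support. -/
lemma aux_start_mem_tail {v : V} (c : G.Walk v v) (h : ¬ c.Nil) : v ∈ c.support.tail := by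
  cases c with
  | nil => exact absurd SimpleGraph.Walk.nil_nil h
  | cons h' q => exact q.end_mem_support

/-- For a nontrivial closed walk, support membership is the same as tail-support membership. -/
lemma aux_mem_support_iff_tail {v : V} (c : G.Walk v v) (h : ¬ c.Nil) (x : V) :
    x ∈ c.support ↔ x ∈ c.support.tail := by
  constructor
  · intro hx
    rw [SimpleGraph.Walk.support_eq_cons, List.mem_cons] at hx
    rcases hx with rfl | hx
    · exact aux_start_mem_tail c h
    · exact hx
  · exact fun hx => List.mem_of_mem_tail hx

/-- The two arcs of a cycle determined by a vertex `b ≠ a` are paths. -/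
lemma aux_arcs_isPath [DecidableEq V] {a b : V} (c' : G.Walk a a) (hc' : c'.IsCycle) (hb : b ∈ c'.support)
    (hab : a ≠ b) :
    (c'.takeUntil b hb).IsPath ∧ (c'.dropUntil b hb).IsPath := by
  have htail : c'.support.tail
      = (c'.takeUntil b hb).support.tail ++ (c'.dropUntil b hb).support.tail := by
    conv_lhs => rw [← c'.take_spec hb]
    rw [SimpleGraph.Walk.tail_support_append]
  have hnd := hc'.support_nodup
  rw [htail, List.nodup_append] at hnd
  obtain ⟨h1, h2, hdisj⟩ := hnd
  have haD : a ∈ (c'.dropUntil b hb).support.tail := by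
    have h := (c'.dropUntil b hb).end_mem_support
    rw [SimpleGraph.Walk.support_eq_cons, List.mem_cons] at h
    rcases h with h | h
    · exact absurd h hab
    · exact h
  have hbT : b ∈ (c'.takeUntil b hb).support.tail := by
    have h := (c'.takeUntil b hb).end_mem_support
    rw [SimpleGraph.Walk.support_eq_cons, List.mem_cons] at h
    rcases h with h | h
    · exact absurd h hab.symm
    · exact h
  constructor
  · rw [SimpleGraph.Walk.isPath_def, SimpleGraph.Walk.support_eq_cons, List.nodup_cons]
    exact ⟨fun haT => hdisj _ haT _ haD rfl, h1⟩
  · rw [SimpleGraph.Walk.isPath_def, SimpleGraph.Walk.support_eq_cons, List.nodup_cons]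
    exact ⟨fun hbD => hdisj _ hbT _ hbD rfl, h2⟩

/-- Gluing a prefix, a middle path inside `S`, and a suffix into a path. -/
lemma aux_sandwich_isPath {s t a b : V} {q1 : G.Walk s a} {d : G.Walk a b} {q2 : G.Walk b t}
    (S : Set V)
    (hq1 : q1.IsPath) (hd : d.IsPath) (hq2 : q2.IsPath)
    (hdS : ∀ z ∈ d.support, z ∈ S)
    (hq1S : ∀ z ∈ q1.support, z ∈ S → z = a)
    (hq2S : ∀ z ∈ q2.support, z ∈ S → z = b)
    (h12 : ∀ z ∈ q1.support, z ∉ q2.support.tail) :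
    (q1.append (d.append q2)).IsPath := by
  have had : a ∉ d.support.tail := by
    have h := hd.support_nodup
    rw [SimpleGraph.Walk.support_eq_cons, List.nodup_cons] at h
    exact h.1
  have hbq2 : b ∉ q2.support.tail := by
    have h := hq2.support_nodup
    rw [SimpleGraph.Walk.support_eq_cons, List.nodup_cons] at h
    exact h.1
  rw [SimpleGraph.Walk.isPath_def, SimpleGraph.Walk.support_append,
    SimpleGraph.Walk.tail_support_append, List.nodup_append]
  refine ⟨hq1.support_nodup, ?_, ?_⟩
  · rw [List.nodup_append]
    refine ⟨hd.support_nodup.tail, hq2.support_nodup.tail, ?_⟩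
    rintro z hz1 _ hz2 rfl
    have hzS := hdS z (List.mem_of_mem_tail hz1)
    have hzb := hq2S z (List.mem_of_mem_tail hz2) hzS
    subst hzb
    exact hbq2 hz2
  · rintro z hz1 _ hz2 rfl
    rcases List.mem_append.mp hz2 with hz2 | hz2
    · have hzS := hdS z (List.mem_of_mem_tail hz2)
      have hza := hq1S z hz1 hzS
      subst hza
      exact had hz2
    · exact h12 z hz1 hz2

end Aux

/-- If every edge lies on some s-t path, then every tracking set is a feedback vertex set:
every simple cycle contains a tracked vertex. -/
theorem tracking_set_is_feedback_vertex_set [Fintype V] [DecidableEq V]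
    (G : SimpleGraph V) (s t : V)
    (hE : ∀ e ∈ G.edgeSet, ∃ p : G.Walk s t, p.IsPath ∧ e ∈ p.edges)
    (T : Finset V) (hT : IsTrackingSet G s t T) :
    ∀ (v : V) (c : G.Walk v v), c.IsCycle → ∃ x ∈ T, x ∈ c.support := by
  intro v c hc
  by_contra hcon
  push_neg at hcon
  set S : Set V := {x | x ∈ c.support} with hSdef
  have hnil : ¬ c.Nil := hc.not_nil
  obtain ⟨u, huadj, c0, hceq⟩ := SimpleGraph.Walk.not_nil_iff.mp hnil
  have hu : u ∈ c.support := by rw [hceq]; simp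
  have hv : v ∈ c.support := c.start_mem_support
  have hvu : v ≠ u := huadj.ne
  obtain ⟨p, hp, hep⟩ := hE s(v, u) huadj
  -- first vertex of p on the cycle
  obtain ⟨a, haS, q1, r1, hpeq, hq1S⟩ :=
    aux_exists_first_mem p S v (p.fst_mem_support_of_mem_edges hep) hv
  have heq1 : s(v, u) ∉ q1.edges := by
    intro h
    have h1 := hq1S v (q1.fst_mem_support_of_mem_edges h) hv
    have h2 := hq1S u (q1.snd_mem_support_of_mem_edges h) hu
    exact hvu (h1.trans h2.symm)
  have her1 : s(v, u) ∈ r1.edges := by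
    have hpe : p.edges = q1.edges ++ r1.edges := by
      rw [hpeq, SimpleGraph.Walk.edges_append]
    rcases List.mem_append.mp (hpe ▸ hep) with h | h
    · exact absurd h heq1
    · exact h
  -- last vertex of p on the cycle (first along the reversed suffix)
  obtain ⟨b, hbS, q2', r2', hr1eq, hq2S'⟩ :=
    aux_exists_first_mem r1.reverse S v
      (by rw [SimpleGraph.Walk.support_reverse, List.mem_reverse]
          exact r1.fst_mem_support_of_mem_edges her1) hv
  set q2 := q2'.reverse with hq2def
  set r2 := r2'.reverse with hr2def
  have hr1 : r1 = r2.append q2 := by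
    have h := congrArg SimpleGraph.Walk.reverse hr1eq
    rwa [SimpleGraph.Walk.reverse_reverse, SimpleGraph.Walk.reverse_append] at h
  have hq2S : ∀ z ∈ q2.support, z ∈ S → z = b := by
    intro z hz hzS
    rw [hq2def, SimpleGraph.Walk.support_reverse, List.mem_reverse] at hz
    exact hq2S' z hz hzS
  have hpeq2 : p = q1.append (r2.append q2) := by rw [hpeq, hr1]
  -- subwalks are paths
  have hpP : (q1.append (r2.append q2)).IsPath := hpeq2 ▸ hp
  have hq1P : q1.IsPath := hpP.of_append_left
  have hmidP : (r2.append q2).IsPath := hpP.of_append_right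
  have hr2P : r2.IsPath := hmidP.of_append_left
  have hq2P : q2.IsPath := hmidP.of_append_right
  -- the tracked edge is in the middle part
  have heq2 : s(v, u) ∉ q2.edges := by
    intro h
    have h1 := hq2S v (q2.fst_mem_support_of_mem_edges h) hv
    have h2 := hq2S u (q2.snd_mem_support_of_mem_edges h) hu
    exact hvu (h1.trans h2.symm)
  have her2 : s(v, u) ∈ r2.edges := by
    have hre : r1.edges = r2.edges ++ q2.edges := by
      rw [hr1, SimpleGraph.Walk.edges_append]
    rcases List.mem_append.mp (hre ▸ her1) with h | h
    · exact h
    · exact absurd h heq2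
  have hab : a ≠ b := by
    intro h
    subst h
    rw [aux_loop_edges_nil hr2P] at her2
    simp at her2
  -- rotate the cycle to start at a, and take the two arcs from a to b
  have haC : a ∈ c.support := haS
  set c' := c.rotate a haC with hc'def
  have hcyc' : c'.IsCycle := hc.rotate haC
  have hnil' : ¬ c'.Nil := hcyc'.not_nil
  have hsupp_iff : ∀ x, x ∈ c'.support ↔ x ∈ c.support := by
    intro x
    rw [aux_mem_support_iff_tail c' hnil', aux_mem_support_iff_tail c hnil,
      (SimpleGraph.Walk.support_rotate c a haC).mem_iff]
  have hb' : b ∈ c'.support := (hsupp_iff b).mpr hbS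
  obtain ⟨hd1P, hDP⟩ := aux_arcs_isPath c' hcyc' hb' hab
  set d1 := c'.takeUntil b hb' with hd1def
  set D := c'.dropUntil b hb' with hDdef
  set d2 := D.reverse with hd2def
  have hd2P : d2.IsPath := hDP.reverse
  have hedges : c'.edges = d1.edges ++ D.edges := by
    conv_lhs => rw [← c'.take_spec hb']
    rw [SimpleGraph.Walk.edges_append]
  have hend : c'.edges.Nodup := hcyc'.isCircuit.isTrail.edges_nodup
  have hd1ne : d1.edges ≠ [] := by
    intro h
    have hlen : d1.length = 0 := by rw [← SimpleGraph.Walk.length_edges, h]; rfl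
    exact hab (SimpleGraph.Walk.nil_iff_length_eq.mpr hlen).eq
  have hd1S : ∀ z ∈ d1.support, z ∈ S :=
    fun z hz => (hsupp_iff z).mp (c'.support_takeUntil_subset hb' hz)
  have hd2S : ∀ z ∈ d2.support, z ∈ S := by
    intro z hz
    rw [hd2def, SimpleGraph.Walk.support_reverse, List.mem_reverse] at hz
    exact (hsupp_iff z).mp (c'.support_dropUntil_subset hb' hz)
  -- disjointness of prefix and suffix supports
  have h12 : ∀ z ∈ q1.support, z ∉ q2.support.tail := by
    have h := hpP.support_nodup
    rw [SimpleGraph.Walk.support_append, SimpleGraph.Walk.tail_support_append,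
      List.nodup_append] at h
    intro z hz1 hz2
    exact h.2.2 z hz1 z (List.mem_append.mpr (Or.inr hz2)) rfl
  -- two distinct s-t paths with the same tracked sequence
  have hP1 : (q1.append (d1.append q2)).IsPath :=
    aux_sandwich_isPath S hq1P hd1P hq2P hd1S hq1S hq2S h12
  have hP2 : (q1.append (d2.append q2)).IsPath :=
    aux_sandwich_isPath S hq1P hd2P hq2P hd2S hq1S hq2S h12
  have hfilter : ∀ (d : G.Walk a b), (∀ z ∈ d.support, z ∈ S) →
      (q1.append (d.append q2)).support.filter (· ∈ T)
        = q1.support.filter (· ∈ T) ++ q2.support.tail.filter (· ∈ T) := by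
    intro d hdS
    rw [SimpleGraph.Walk.support_append, SimpleGraph.Walk.tail_support_append,
      List.filter_append, List.filter_append]
    have hmid : d.support.tail.filter (· ∈ T) = [] := by
      rw [List.filter_eq_nil_iff]
      intro z hz
      simp only [decide_eq_true_eq]
      intro hzT
      exact hcon z hzT (hdS z (List.mem_of_mem_tail hz))
    rw [hmid, List.nil_append]
  have hEq := hT _ _ hP1 hP2 (by rw [hfilter d1 hd1S, hfilter d2 hd2S])
  have hEdges := congrArg SimpleGraph.Walk.edges hEq
  rw [SimpleGraph.Walk.edges_append, SimpleGraph.Walk.edges_append,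
    SimpleGraph.Walk.edges_append, SimpleGraph.Walk.edges_append] at hEdges
  have h12e : d1.edges = d2.edges :=
    List.append_cancel_right (List.append_cancel_left hEdges)
  obtain ⟨ed, hed⟩ := List.exists_mem_of_ne_nil d1.edges hd1ne
  have hedD : ed ∈ D.edges := by
    have h : ed ∈ d2.edges := h12e ▸ hed
    rwa [hd2def, SimpleGraph.Walk.edges_reverse, List.mem_reverse] at h
  rw [hedges, List.nodup_append] at hend
  exact hend.2.2 ed hed ed hedD rfl
end

section
/- Let G be a finite undirected simple graph with distinguished vertices s and t in which every edge lies on some s-t path. Let v ∉ {s,t} be a vertex of degree exactly 2 whose two neighbors are adjacent to each other, and let G − v denote the graph obtained from G by deleting v and its incident edges. Then every simple cycle of G − v contains at least one entry-exit pair with respect to s and t in G − v. -/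
open SimpleGraph

variable {V : Type*}

lemma exists_first {H : SimpleGraph V} (P : V → Prop) :
    ∀ {x y : V} (p : H.Walk x y) (z0 : V), z0 ∈ p.support → P z0 →
    ∃ (z : V) (q1 : H.Walk x z) (q2 : H.Walk z y), p = q1.append q2 ∧ P z ∧
      ∀ u ∈ q1.support, P u → u = z := by
  intro x y p
  induction p with
  | nil =>
    intro z0 hz0 hP
    simp only [Walk.support_nil, List.mem_singleton] at hz0
    subst hz0
    exact ⟨z0, Walk.nil, Walk.nil, rfl, hP, by simp⟩
  | @cons x w y h p ih =>
    intro z0 hz0 hP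
    by_cases hx : P x
    · exact ⟨x, Walk.nil, Walk.cons h p, rfl, hx, by simp⟩
    · have hz0' : z0 ∈ p.support := by
        rcases List.mem_cons.mp (by simpa using hz0) with rfl | h'
        · exact absurd hP hx
        · exact h'
      obtain ⟨z, q1, q2, hq, hPz, hall⟩ := ih z0 hz0' hP
      refine ⟨z, Walk.cons h q1, q2, by simp [hq], hPz, ?_⟩
      intro u hu hPu
      rcases List.mem_cons.mp (by simpa using hu) with rfl | h'
      · exact absurd hPu hx
      · exact hall u h' hPu

lemma exists_entry_exit {H : SimpleGraph V} {s t w : V} (c : H.Walk w w)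
    (p : H.Walk s t) (hp : p.IsPath) {u1 u2 : V} (h1p : u1 ∈ p.support) (h1c : u1 ∈ c.support)
    (h2p : u2 ∈ p.support) (h2c : u2 ∈ c.support) (hne : u1 ≠ u2) :
    ∃ s' t', IsEntryExit H s t c s' t' := by
  obtain ⟨s', ps, q, rfl, hs'c, hps⟩ := exists_first (· ∈ c.support) p u1 h1p h1c
  have hnd : (ps.append q).support.Nodup := (Walk.isPath_def _).mp hp
  rw [Walk.support_append] at hnd
  have key : ∀ u, u ∈ (ps.append q).support → u ∈ c.support → u ∈ q.support := by
    intro u hu huc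
    rw [Walk.support_append, List.mem_append] at hu
    rcases hu with h | h
    · rw [hps u h huc]; exact q.start_mem_support
    · exact List.mem_of_mem_tail h
  have hwit : ∃ z0, z0 ∈ q.support ∧ z0 ∈ c.support ∧ z0 ≠ s' := by
    by_cases h : u1 = s'
    · exact ⟨u2, key u2 h2p h2c, h2c, fun hh => hne (h ▸ hh ▸ rfl)⟩
    · exact ⟨u1, key u1 h1p h1c, h1c, h⟩
  obtain ⟨z0, hz0q, hz0c, hz0s⟩ := hwit
  obtain ⟨t', K, q0, hqe, ⟨ht'c, ht's⟩, hK⟩ :=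
    exists_first (fun u => u ∈ c.support ∧ u ≠ s') q.reverse z0
      (by rw [Walk.support_reverse]; exact List.mem_reverse.mpr hz0q) ⟨hz0c, hz0s⟩
  have hq : q.IsPath := hp.of_append_right
  have hqr : (K.append q0).IsPath := hqe ▸ hq.reverse
  have hKpath : K.IsPath := hqr.of_append_left
  have hndr : (K.support ++ q0.support.tail).Nodup := by
    have := (Walk.isPath_def _).mp hqr
    rwa [Walk.support_append] at this
  have hs'K : s' ∉ K.support := by
    have hs'q0 : s' ∈ q0.support := q0.end_mem_support
    rw [q0.support_eq_cons, List.mem_cons] at hs'q0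
    rcases hs'q0 with h | h
    · exact absurd h.symm ht's
    · intro hmem
      exact (List.nodup_append'.mp hndr).2.2 hmem h
  have hKq : ∀ x, x ∈ K.support → x ∈ q.support := by
    intro x hx
    have : x ∈ q.reverse.support := by
      rw [hqe, Walk.support_append]; exact List.mem_append_left _ hx
    rwa [Walk.support_reverse, List.mem_reverse] at this
  refine ⟨s', t', hs'c, ht'c, ps, K.reverse, hp.of_append_left, hKpath.reverse, ?_, ?_, ?_⟩
  · intro x hxps hxpt
    rw [Walk.support_reverse, List.mem_reverse] at hxpt
    have hxq : x ∈ q.support := hKq x hxpt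
    rw [q.support_eq_cons, List.mem_cons] at hxq
    rcases hxq with rfl | h
    · exact hs'K hxpt
    · exact (List.nodup_append'.mp hnd).2.2 hxps h
  · intro x hx hxc
    exact hps x hx hxc
  · intro x hxpt hxc
    rw [Walk.support_reverse, List.mem_reverse] at hxpt
    by_cases hxs : x = s'
    · exact absurd (hxs ▸ hxpt) hs'K
    · exact hK x hxpt ⟨hxc, hxs⟩

lemma reduce {G : SimpleGraph V} {s t v a b : V}
    (hvs : v ≠ s) (hvt : v ≠ t)
    (hnbr : ∀ z, G.Adj v z → z = a ∨ z = b) (hadj : G.Adj a b)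
    (p : G.Walk s t) (hp : p.IsPath) (e : Sym2 V) (he : e ∈ p.edges) (hev : v ∉ e) :
    ∃ p' : G.Walk s t, p'.IsPath ∧ e ∈ p'.edges ∧ v ∉ p'.support := by
  by_cases hv : v ∈ p.support
  · obtain ⟨q, r, rfl⟩ := Walk.mem_support_iff_exists_append.mp hv
    obtain ⟨y, hvy, r2, rfl⟩ := Walk.exists_eq_cons_of_ne hvt r
    obtain ⟨x, hvx, r1, hq⟩ := Walk.exists_eq_cons_of_ne hvs q.reverse
    have hq' : q = (Walk.cons hvx r1).reverse := by rw [← hq, Walk.reverse_reverse]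
    subst hq'
    have hnd : (r1.support.reverse ++ (v :: r2.support)).Nodup := by
      have := (Walk.isPath_def _).mp hp
      simpa [Walk.support_append, Walk.support_reverse] using this
    obtain ⟨hnd1, hnd2, hdisj⟩ := List.nodup_append'.mp hnd
    have hxA : x ∈ r1.support.reverse := by
      rw [List.mem_reverse]; exact r1.start_mem_support
    have hxy : x ≠ y := by
      intro hh
      exact hdisj hxA (by rw [hh]; exact List.mem_cons_of_mem _ r2.start_mem_support)
    have hadjxy : G.Adj x y := by
      rcases hnbr x hvx with rfl | rfl <;> rcases hnbr y hvy with rfl | rfl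
      · exact absurd rfl hxy
      · exact hadj
      · exact hadj.symm
      · exact absurd rfl hxy
    refine ⟨r1.reverse.append (Walk.cons hadjxy r2), ?_, ?_, ?_⟩
    · rw [Walk.isPath_def]
      have hsub : List.Sublist (r1.support.reverse ++ r2.support)
          (r1.support.reverse ++ (v :: r2.support)) :=
        List.Sublist.append_left (List.sublist_cons_self _ _) _
      have := hnd.sublist hsub
      simpa [Walk.support_append, Walk.support_reverse] using this
    · have heq : ((Walk.cons hvx r1).reverse.append (Walk.cons hvy r2)).edges
          = r1.edges.reverse ++ ([s(v,x)] ++ (s(v,y) :: r2.edges)) := by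
        simp [Walk.edges_append, Walk.edges_reverse]
      rw [heq] at he
      simp only [List.mem_append, List.mem_cons, List.not_mem_nil, or_false] at he
      have hne1 : e ≠ s(v,x) := by rintro rfl; exact hev (Sym2.mem_mk_left v x)
      have hne2 : e ≠ s(v,y) := by rintro rfl; exact hev (Sym2.mem_mk_left v y)
      simp only [Walk.edges_append, Walk.edges_reverse, Walk.edges_cons, List.mem_append,
        List.mem_cons]
      rcases he with h | h | h | h
      · exact Or.inl h
      · exact absurd h hne1
      · exact absurd h hne2
      · exact Or.inr (Or.inr h)
    · intro hvp
      simp only [Walk.support_append, Walk.support_reverse, Walk.support_cons,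
        List.tail_cons, List.mem_append, List.mem_reverse] at hvp
      rcases hvp with h | h
      · exact hdisj (List.mem_reverse.mpr h) List.mem_cons_self
      · exact (List.nodup_cons.mp hnd2).1 h
  · exact ⟨p, hp, he, hv⟩

/-- If every edge of `G` lies on some s-t path and `v ∉ {s,t}` is a degree-2 vertex whose
two neighbors are adjacent, then in `G - v` (obtained by deleting `v`'s incident edges,
so `v` becomes isolated) every simple cycle still contains an entry-exit pair. -/
theorem cycles_have_entry_exit_after_triangle_reduction [Fintype V]
    (G : SimpleGraph V) [DecidableRel G.Adj] (s t v a b : V)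
    (hE : ∀ e ∈ G.edgeSet, ∃ p : G.Walk s t, p.IsPath ∧ e ∈ p.edges)
    (hvs : v ≠ s) (hvt : v ≠ t) (hdeg : G.degree v = 2)
    (hab : a ≠ b) (hva : G.Adj v a) (hvb : G.Adj v b) (hadj : G.Adj a b) :
    ∀ (w : V) (c : (G.deleteEdges (G.incidenceSet v)).Walk w w), c.IsCycle →
      ∃ s' t', IsEntryExit (G.deleteEdges (G.incidenceSet v)) s t c s' t' := by
  classical
  intro w c hc
  have hnbr : ∀ z, G.Adj v z → z = a ∨ z = b := by
    intro z hz
    have hsub : ({a, b} : Finset V) ⊆ G.neighborFinset v := by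
      intro u hu
      rcases Finset.mem_insert.mp hu with rfl | hu
      · exact (G.mem_neighborFinset v u).mpr hva
      · rw [Finset.mem_singleton] at hu
        subst hu
        exact (G.mem_neighborFinset v u).mpr hvb
    have hcard : ({a, b} : Finset V).card = 2 := by
      rw [Finset.card_insert_of_notMem (by simpa using hab), Finset.card_singleton]
    have heqf : ({a, b} : Finset V) = G.neighborFinset v :=
      Finset.eq_of_subset_of_card_le hsub (by rw [hcard]; exact le_of_eq hdeg)
    have hzm : z ∈ G.neighborFinset v := (G.mem_neighborFinset v z).mpr hz
    rw [← heqf] at hzm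
    simpa using hzm
  cases c with
  | nil => exact absurd rfl hc.ne_nil
  | @cons _ x _ ha' q =>
    rw [SimpleGraph.deleteEdges_adj] at ha'
    obtain ⟨hGadj, hnin⟩ := ha'
    have hvne : v ∉ (s(w, x) : Sym2 V) := by
      intro h
      exact hnin ⟨hGadj, h⟩
    obtain ⟨p, hp, hep⟩ := hE s(w, x) hGadj
    obtain ⟨p', hp', hep', hvp'⟩ := reduce hvs hvt hnbr hadj p hp s(w, x) hep hvne
    have hedges : ∀ e' ∈ p'.edges, e' ∈ (G.deleteEdges (G.incidenceSet v)).edgeSet := by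
      intro e' he'
      rw [SimpleGraph.edgeSet_deleteEdges]
      refine ⟨p'.edges_subset_edgeSet he', fun hin => ?_⟩
      induction e' with
      | h c1 c2 =>
        rcases Sym2.mem_iff.mp hin.2 with rfl | rfl
        · exact hvp' (p'.fst_mem_support_of_mem_edges he')
        · exact hvp' (p'.snd_mem_support_of_mem_edges he')
    let p'' := p'.transfer (G.deleteEdges (G.incidenceSet v)) hedges
    have hp'' : p''.IsPath := hp'.transfer hedges
    have hep'' : s(w, x) ∈ p''.edges := by
      rwa [Walk.edges_transfer]
    have hadj'' : (G.deleteEdges (G.incidenceSet v)).Adj w x := by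
      rw [SimpleGraph.deleteEdges_adj]; exact ⟨hGadj, hnin⟩
    exact exists_entry_exit (Walk.cons hadj'' q) p'' hp''
      (p''.fst_mem_support_of_mem_edges hep'')
      ((Walk.cons hadj'' q).start_mem_support)
      (p''.snd_mem_support_of_mem_edges hep'')
      (by rw [Walk.support_cons]; exact List.mem_cons_of_mem _ q.start_mem_support)
      hGadj.ne
end
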